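/- arXiv:1512.04473 — 5 statements merged into one kernel-verified Lean document; each statement's English description precedes it below -/
import Mathlib

section
/- Let λ_n : (−δ₀,δ₀) → ℂ be continuous with F(λ_n(t)) = 2cos t for all t, and set λ₀ = λ_n(0). If Φ₀(·,λ₀) is not identically zero on [0,1] (which holds, after possibly interchanging the roles of Φ and G, whenever the geometric multiplicity of the eigenvalue λ₀ of the periodic problem L₀ is 1), then there is δ ∈ (0,δ₀) such that ∥Φ_t(·,λ_n(t))∥ ≠ 0 and ∥Φ_{−t}(·,λ_n(t))∥ ≠ 0 for all |t| < δ, for each fixed x ∈ [0,1] the functions t ↦ Φ_t(x,λ_n(t))/∥Φ_t(·,λ_n(t))∥ and t ↦ conj(Φ_{−t}(x,λ_n(t)))/∥Φ_{−t}(·,λ_n(t))∥ are continuous at t = 0, and t ↦ α_n(t) is continuous at t = 0. -/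
open MeasureTheory Set
open scoped Real Classical

noncomputable section

/-- `y` (with first derivative `yd`) solves the Hill equation `-y'' + q y = λ y` on `[0,1]`
in the Carathéodory sense: `y` and `y'` are absolutely continuous and the equation holds
almost everywhere, expressed via the equivalent integral equations. -/
structure IsHillSolution (q : ℝ → ℂ) (lam : ℂ) (y yd : ℝ → ℂ) : Prop where
  int_yd : IntervalIntegrable yd volume 0 1
  int_rhs : IntervalIntegrable (fun s => q s * y s - lam * y s) volume 0 1
  y_eq : ∀ x ∈ Icc (0:ℝ) 1, y x = y 0 + ∫ s in (0:ℝ)..x, yd s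
  yd_eq : ∀ x ∈ Icc (0:ℝ) 1, yd x = yd 0 + ∫ s in (0:ℝ)..x, (q s * y s - lam * y s)

/-- The standard context for the Hill operator: a `1`-periodic integrable potential `q`
together with the fundamental solutions `θ`, `φ` (with `x`-derivatives `θd`, `φd`)
of `-y'' + q y = λ y` normalized at `x = 0`, jointly continuous in `(x, λ)`,
entire in `λ` for fixed `x`, and satisfying the Wronskian identity. -/
structure HillContext where
  q : ℝ → ℂ
  int_q : IntervalIntegrable q volume 0 1
  periodic_q : ∀ x, q (x + 1) = q x
  θ : ℝ → ℂ → ℂ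
  θd : ℝ → ℂ → ℂ
  φ : ℝ → ℂ → ℂ
  φd : ℝ → ℂ → ℂ
  sol_θ : ∀ lam, IsHillSolution q lam (fun x => θ x lam) (fun x => θd x lam)
  sol_φ : ∀ lam, IsHillSolution q lam (fun x => φ x lam) (fun x => φd x lam)
  θ_init : ∀ lam, θ 0 lam = 1
  θd_init : ∀ lam, θd 0 lam = 0
  φ_init : ∀ lam, φ 0 lam = 0
  φd_init : ∀ lam, φd 0 lam = 1
  θ_cont : Continuous fun p : ℝ × ℂ => θ p.1 p.2
  θd_cont : Continuous fun p : ℝ × ℂ => θd p.1 p.2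
  φ_cont : Continuous fun p : ℝ × ℂ => φ p.1 p.2
  φd_cont : Continuous fun p : ℝ × ℂ => φd p.1 p.2
  θ_entire : ∀ x, Differentiable ℂ (θ x)
  θd_entire : ∀ x, Differentiable ℂ (θd x)
  φ_entire : ∀ x, Differentiable ℂ (φ x)
  φd_entire : ∀ x, Differentiable ℂ (φd x)
  wronskian : ∀ x lam, θ x lam * φd x lam - θd x lam * φ x lam = 1

namespace HillContext

variable (H : HillContext)

/-- The Hill discriminant `F(λ) = θ(1,λ) + φ'(1,λ)`. -/
def F (lam : ℂ) : ℂ := H.θ 1 lam + H.φd 1 lam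

/-- `Φ_t(x,λ) = φ(1,λ)θ(x,λ) + (e^{it} - θ(1,λ))φ(x,λ)`. -/
def Phi (t : ℝ) (x : ℝ) (lam : ℂ) : ℂ :=
  H.φ 1 lam * H.θ x lam + (Complex.exp (Complex.I * t) - H.θ 1 lam) * H.φ x lam

/-- `G_t(x,λ) = θ'(1,λ)φ(x,λ) + (e^{it} - φ'(1,λ))θ(x,λ)`. -/
def G (t : ℝ) (x : ℝ) (lam : ℂ) : ℂ :=
  H.θd 1 lam * H.φ x lam + (Complex.exp (Complex.I * t) - H.φd 1 lam) * H.θ x lam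

end HillContext

/-- The `L²(0,1)` norm of a function. -/
def l2norm (f : ℝ → ℂ) : ℝ := Real.sqrt (∫ x in (0:ℝ)..1, ‖f x‖ ^ 2)

namespace HillContext

variable (H : HillContext)

/-- The normalized eigenfunction `Ψ_{n,t}` along the branch `lamn`. -/
def Psi (lamn : ℝ → ℂ) (t : ℝ) (x : ℝ) : ℂ :=
  if l2norm (fun s => H.Phi t s (lamn t)) ≠ 0 then
    H.Phi t x (lamn t) / (l2norm (fun s => H.Phi t s (lamn t)) : ℂ)
  else
    H.G t x (lamn t) / (l2norm (fun s => H.G t s (lamn t)) : ℂ)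

/-- The normalized adjoint eigenfunction `Ψ*_{n,t}` along the branch `lamn`. -/
def PsiStar (lamn : ℝ → ℂ) (t : ℝ) (x : ℝ) : ℂ :=
  if l2norm (fun s => H.Phi (-t) s (lamn t)) ≠ 0 then
    (starRingEnd ℂ) (H.Phi (-t) x (lamn t)) / (l2norm (fun s => H.Phi (-t) s (lamn t)) : ℂ)
  else
    (starRingEnd ℂ) (H.G (-t) x (lamn t)) / (l2norm (fun s => H.G (-t) s (lamn t)) : ℂ)

/-- `α_n(t) = ∫₀¹ Ψ_{n,t}(x) conj(Ψ*_{n,t}(x)) dx`. -/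
def alpha (lamn : ℝ → ℂ) (t : ℝ) : ℂ :=
  ∫ x in (0:ℝ)..1, H.Psi lamn t x * (starRingEnd ℂ) (H.PsiStar lamn t x)

end HillContext

/-!
Replace the branch `λ_n` by a continuous function on all of `ℝ` that agrees with it near `0`.
Then `(t, x) ↦ Φ_{±t}(x, λ_n(t))` is jointly continuous, so the `L²` norms are continuous in `t`;
at `t = 0` both equal `∥Φ₀(·,λ₀)∥ > 0`. Every quantity in the statement is thus, near `0`, a
quotient of continuous functions with nonvanishing denominator.
-/

open Filter Topology

theorem ContinuousOn.exists_continuous_eqOn_Icc {α β : Type*} [LinearOrder α]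
    [TopologicalSpace α] [OrderTopology α] [TopologicalSpace β] {f : α → β} {s : Set α}
    {a b : α} (hf : ContinuousOn f s) (hab : a ≤ b) (hs : Icc a b ⊆ s) :
    ∃ g : α → β, Continuous g ∧ EqOn g f (Icc a b) :=
  ⟨IccExtend hab ((Icc a b).domRestrict f), continuous_IccExtend_iff.2 (hf.mono hs).domRestrict,
    fun _ hx => IccExtend_of_mem hab _ hx⟩

theorem continuous_l2norm {X : Type*} [TopologicalSpace X] {f : X → ℝ → ℂ}
    (hf : Continuous (Function.uncurry f)) : Continuous fun p => l2norm (f p) :=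
  Real.continuous_sqrt.comp <|
    intervalIntegral.continuous_parametric_intervalIntegral_of_continuous'
      (f := fun p x => ‖f p x‖ ^ 2) (by fun_prop) 0 1

theorem l2norm_pos {f : ℝ → ℂ} (hf : ContinuousOn f (Icc 0 1))
    (hne : ∃ x ∈ Icc (0:ℝ) 1, f x ≠ 0) : 0 < l2norm f := by
  obtain ⟨x, hx, hfx⟩ := hne
  exact Real.sqrt_pos.2 <| intervalIntegral.integral_pos one_pos (by fun_prop)
    (fun _ _ => by positivity) ⟨x, hx, by positivity⟩

namespace HillContext

variable (H : HillContext)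

theorem continuous_Phi {X : Type*} [TopologicalSpace X] {τ x : X → ℝ} {μ : X → ℂ}
    (hτ : Continuous τ) (hx : Continuous x) (hμ : Continuous μ) :
    Continuous fun p => H.Phi (τ p) (x p) (μ p) := by
  have hθ₁ : Continuous fun p => H.θ 1 (μ p) := H.θ_cont.comp (continuous_const.prodMk hμ)
  have hφ₁ : Continuous fun p => H.φ 1 (μ p) := H.φ_cont.comp (continuous_const.prodMk hμ)
  have hθ : Continuous fun p => H.θ (x p) (μ p) := H.θ_cont.comp (hx.prodMk hμ)
  have hφ : Continuous fun p => H.φ (x p) (μ p) := H.φ_cont.comp (hx.prodMk hμ)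
  unfold Phi
  fun_prop

theorem alpha_eq_of_l2norm_ne_zero (lamn : ℝ → ℂ) {t : ℝ}
    (hpos : l2norm (fun s => H.Phi t s (lamn t)) ≠ 0)
    (hneg : l2norm (fun s => H.Phi (-t) s (lamn t)) ≠ 0) :
    H.alpha lamn t = (∫ x in (0:ℝ)..1, H.Phi t x (lamn t) * H.Phi (-t) x (lamn t)) /
      (l2norm (fun s => H.Phi t s (lamn t)) * l2norm (fun s => H.Phi (-t) s (lamn t)) : ℂ) := by
  simp only [alpha, Psi, PsiStar, if_pos hpos, if_pos hneg, map_div₀, Complex.conj_conj,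
    Complex.conj_ofReal, div_mul_div_comm, intervalIntegral.integral_div]

section ContinuousBranch

variable {μ : ℝ → ℂ} (hμ : Continuous μ) (h0 : ∃ x ∈ Icc (0:ℝ) 1, H.Phi 0 x (μ 0) ≠ 0)
include hμ

theorem continuous_Phi_branch {σ : ℝ → ℝ} (hσ : Continuous σ) :
    Continuous (Function.uncurry fun t x => H.Phi (σ t) x (μ t)) :=
  H.continuous_Phi (hσ.comp continuous_fst) continuous_snd (hμ.comp continuous_fst)

theorem continuous_l2norm_Phi_branch {σ : ℝ → ℝ} (hσ : Continuous σ) :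
    Continuous fun t => (l2norm (fun s => H.Phi (σ t) s (μ t)) : ℂ) :=
  Complex.continuous_ofReal.comp (continuous_l2norm (H.continuous_Phi_branch hμ hσ))

include h0

theorem eventually_l2norm_Phi_ne_zero :
    ∀ᶠ t in 𝓝 0, l2norm (fun s => H.Phi t s (μ t)) ≠ 0 ∧
      l2norm (fun s => H.Phi (-t) s (μ t)) ≠ 0 := by
  have hpos : 0 < l2norm (fun s => H.Phi 0 s (μ 0)) :=
    l2norm_pos (H.continuous_Phi continuous_const continuous_id continuous_const).continuousOn h0
  have hpos' : 0 < l2norm (fun s => H.Phi (-0) s (μ 0)) := by rwa [neg_zero]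
  exact ((continuous_l2norm (H.continuous_Phi_branch hμ continuous_id)).continuousAt.eventually_ne
    hpos.ne').and
    ((continuous_l2norm (H.continuous_Phi_branch hμ continuous_neg)).continuousAt.eventually_ne
      hpos'.ne')

theorem continuousAt_Phi_div_l2norm (x : ℝ) :
    ContinuousAt (fun t => H.Phi t x (μ t) / (l2norm (fun s => H.Phi t s (μ t)) : ℂ)) 0 :=
  (H.continuous_Phi continuous_id continuous_const hμ).continuousAt.div
    (H.continuous_l2norm_Phi_branch hμ continuous_id).continuousAt
    (by exact_mod_cast (H.eventually_l2norm_Phi_ne_zero hμ h0).self_of_nhds.1)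

theorem continuousAt_conj_Phi_neg_div_l2norm (x : ℝ) :
    ContinuousAt (fun t => (starRingEnd ℂ) (H.Phi (-t) x (μ t)) /
      (l2norm (fun s => H.Phi (-t) s (μ t)) : ℂ)) 0 :=
  (Complex.continuous_conj.comp
    (H.continuous_Phi continuous_neg continuous_const hμ)).continuousAt.div
    (H.continuous_l2norm_Phi_branch hμ continuous_neg).continuousAt
    (by exact_mod_cast (H.eventually_l2norm_Phi_ne_zero hμ h0).self_of_nhds.2)

theorem continuousAt_alpha : ContinuousAt (H.alpha μ) 0 := by
  have hnum : Continuous fun t => ∫ x in (0:ℝ)..1, H.Phi t x (μ t) * H.Phi (-t) x (μ t) :=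
    intervalIntegral.continuous_parametric_intervalIntegral_of_continuous'
      ((H.continuous_Phi_branch hμ continuous_id).mul
        (H.continuous_Phi_branch hμ continuous_neg)) 0 1
  have hden : Continuous fun t =>
      (l2norm (fun s => H.Phi t s (μ t)) * l2norm (fun s => H.Phi (-t) s (μ t)) : ℂ) :=
    (H.continuous_l2norm_Phi_branch hμ continuous_id).mul
      (H.continuous_l2norm_Phi_branch hμ continuous_neg)
  have hne := H.eventually_l2norm_Phi_ne_zero hμ h0
  refine (hnum.continuousAt.div hden.continuousAt ?_).congr ?_
  · obtain ⟨hpos, hneg⟩ := hne.self_of_nhds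
    exact mul_ne_zero (by exact_mod_cast hpos) (by exact_mod_cast hneg)
  · filter_upwards [hne] with t ⟨hpos, hneg⟩
    exact (H.alpha_eq_of_l2norm_ne_zero μ hpos hneg).symm

end ContinuousBranch

end HillContext

theorem Psi_alpha_continuousAt_zero_general (H : HillContext) (δ₀ : ℝ) (hδ₀ : 0 < δ₀)
    (lamn : ℝ → ℂ) (hcont : ContinuousOn lamn (Ioo (-δ₀) δ₀))
    (hPhi_ne : ∃ x ∈ Icc (0:ℝ) 1, H.Phi 0 x (lamn 0) ≠ 0) :
    ∃ δ, 0 < δ ∧ δ < δ₀ ∧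
      (∀ t : ℝ, |t| < δ →
        l2norm (fun s => H.Phi t s (lamn t)) ≠ 0 ∧
        l2norm (fun s => H.Phi (-t) s (lamn t)) ≠ 0) ∧
      (∀ x ∈ Icc (0:ℝ) 1,
        ContinuousAt
          (fun t : ℝ => H.Phi t x (lamn t) / (l2norm (fun s => H.Phi t s (lamn t)) : ℂ)) 0 ∧
        ContinuousAt
          (fun t : ℝ => (starRingEnd ℂ) (H.Phi (-t) x (lamn t)) /
            (l2norm (fun s => H.Phi (-t) s (lamn t)) : ℂ)) 0) ∧
      ContinuousAt (H.alpha lamn) 0 := by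
  obtain ⟨μ, hμ, hμ_eq⟩ := hcont.exists_continuous_eqOn_Icc (a := -(δ₀ / 2)) (b := δ₀ / 2)
    (by linarith) (Icc_subset_Ioo (by linarith) (by linarith))
  have hnear : ∀ᶠ t in 𝓝 0, μ t = lamn t :=
    eventually_of_mem (Icc_mem_nhds (by linarith) (by linarith)) hμ_eq
  have h0 : ∃ x ∈ Icc (0:ℝ) 1, H.Phi 0 x (μ 0) ≠ 0 := hnear.self_of_nhds ▸ hPhi_ne
  obtain ⟨ε, hε, hball⟩ := Metric.eventually_nhds_iff.1
    ((H.eventually_l2norm_Phi_ne_zero hμ h0).and hnear)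
  refine ⟨min ε (δ₀ / 2), by positivity, by linarith [min_le_right ε (δ₀ / 2)],
    fun t ht => ?_, fun x _ => ⟨?_, ?_⟩, ?_⟩
  · obtain ⟨hne, heq⟩ := hball (show dist t 0 < ε by
      simpa using ht.trans_le (min_le_left _ _))
    rwa [← heq]
  · exact (H.continuousAt_Phi_div_l2norm hμ h0 x).congr (hnear.mono fun t ht => by simp only [ht])
  · exact (H.continuousAt_conj_Phi_neg_div_l2norm hμ h0 x).congr
      (hnear.mono fun t ht => by simp only [ht])
  · exact (H.continuousAt_alpha hμ h0).congr
      (hnear.mono fun t ht => by simp only [HillContext.alpha, HillContext.Psi,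
        HillContext.PsiStar, ht])

/-- (Lemma 1(b).)  Let `λ_n : (-δ₀,δ₀) → ℂ` be continuous with `F(λ_n(t)) = 2 cos t`, and
set `λ₀ = λ_n(0)`.  If `Φ₀(·,λ₀)` is not identically zero on `[0,1]` (which holds, after
possibly interchanging the roles of `Φ` and `G`, whenever the geometric multiplicity of the
eigenvalue `λ₀` of the periodic problem `L₀` is `1`), then there is `δ ∈ (0,δ₀)` such that
`∥Φ_t(·,λ_n(t))∥ ≠ 0` and `∥Φ_{-t}(·,λ_n(t))∥ ≠ 0` for `|t| < δ`; for each fixed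
`x ∈ [0,1]` the normalized eigenfunction `t ↦ Φ_t(x,λ_n(t))/∥Φ_t(·,λ_n(t))∥` and the
adjoint one are continuous at `t = 0`; and `t ↦ α_n(t)` is continuous at `t = 0`. -/
theorem Psi_alpha_continuousAt_zero (H : HillContext) (δ₀ : ℝ) (hδ₀ : 0 < δ₀)
    (lamn : ℝ → ℂ) (hcont : ContinuousOn lamn (Ioo (-δ₀) δ₀))
    (hF : ∀ t ∈ Ioo (-δ₀) δ₀, H.F (lamn t) = 2 * (Real.cos t : ℂ))
    (hPhi_ne : ∃ x ∈ Icc (0:ℝ) 1, H.Phi 0 x (lamn 0) ≠ 0) :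
    ∃ δ, 0 < δ ∧ δ < δ₀ ∧
      (∀ t : ℝ, |t| < δ →
        l2norm (fun s => H.Phi t s (lamn t)) ≠ 0 ∧
        l2norm (fun s => H.Phi (-t) s (lamn t)) ≠ 0) ∧
      (∀ x ∈ Icc (0:ℝ) 1,
        ContinuousAt
          (fun t : ℝ => H.Phi t x (lamn t) / (l2norm (fun s => H.Phi t s (lamn t)) : ℂ)) 0 ∧
        ContinuousAt
          (fun t : ℝ => (starRingEnd ℂ) (H.Phi (-t) x (lamn t)) /
            (l2norm (fun s => H.Phi (-t) s (lamn t)) : ℂ)) 0) ∧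
      ContinuousAt (H.alpha lamn) 0 :=
  Psi_alpha_continuousAt_zero_general H δ₀ hδ₀ lamn hcont hPhi_ne
end
end

section
/- Let λ_n : (−δ₀,δ₀) → ℂ be continuous with F(λ_n(t)) = 2cos t for all t, let λ₀ = λ_n(0), and suppose the geometric multiplicity of λ₀ as an eigenvalue of the periodic problem L₀ is 2, i.e. φ(1,λ₀) = 0, θ'(1,λ₀) = 0, θ(1,λ₀) = φ'(1,λ₀) = 1. Assume φ(1,·) is not identically zero. Then there exist δ > 0 and M > 0 such that for every real t with 0 < |t| < δ one has φ(1,λ_n(t)) ≠ 0, ∥Φ_t(·,λ_n(t))∥ ≠ 0, and |Φ_t(x,λ_n(t))| / ∥Φ_t(·,λ_n(t))∥ ≤ M for all x ∈ [0,1]; that is, the normalized eigenfunction Ψ_{n,t}(x) is bounded on a punctured neighborhood of t = 0. -/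
open MeasureTheory Set
open scoped Real Classical

noncomputable section

/-! Since `F(λ₀) = 2` while `F(λ_n(t)) = 2 cos t ≠ 2` for small `t ≠ 0`, the branch avoids `λ₀`
for `t ≠ 0`, and as the zeros of the entire function `φ(1,·)` are isolated, `φ(1,λ_n(t)) ≠ 0`.
Hence `Φ_t = c θ + d φ` with `(c, d) ≠ 0`. For `λ` in a compact set `K`, `|c θ + d φ| ≤ C ‖(c, d)‖`
pointwise, and, because `θ` and `φ` are linearly independent, `‖c θ + d φ‖ ≥ √ε ‖(c, d)‖` in
`L²(0,1)` with `ε > 0` the minimum over `K × sphere`; so `|Φ_t| / ‖Φ_t‖ ≤ C / √ε`. -/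

open Filter Topology

theorem Differentiable.eventually_nhdsNE_ne_zero {f : ℂ → ℂ} (hf : Differentiable ℂ f)
    (hne : ∃ w, f w ≠ 0) (z : ℂ) : ∀ᶠ μ in 𝓝[≠] z, f μ ≠ 0 := by
  refine not_frequently.1 fun hfreq => ?_
  obtain ⟨w, hw⟩ := hne
  have hf' := hf.differentiableOn.analyticOnNhd isOpen_univ
  exact hw (hf'.eqOn_zero_of_preconnected_of_frequently_eq_zero isPreconnected_univ (mem_univ z)
    hfreq (mem_univ w))

theorem eventually_nhdsNE_zero_cos_ne_one : ∀ᶠ t in 𝓝[≠] (0 : ℝ), Real.cos t ≠ 1 := by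
  filter_upwards [nhdsWithin_le_nhds (Ioo_mem_nhds (neg_lt_zero.2 Real.two_pi_pos) Real.two_pi_pos),
    self_mem_nhdsWithin] with t ht ht0 hcos
  exact ht0 ((Real.cos_eq_one_iff_of_lt_of_lt ht.1 ht.2).1 hcos)

section Combination

variable {X : Type*} {f g : ℝ → X → ℂ}

theorem integral_norm_sq_smul_combination (a c d : ℂ) (μ : X) :
    ∫ x in (0:ℝ)..1, ‖a * c * f x μ + a * d * g x μ‖ ^ 2
      = ‖a‖ ^ 2 * ∫ x in (0:ℝ)..1, ‖c * f x μ + d * g x μ‖ ^ 2 := by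
  rw [← intervalIntegral.integral_const_mul]
  congr 1 with x
  rw [show a * c * f x μ + a * d * g x μ = a * (c * f x μ + d * g x μ) by ring, norm_mul, mul_pow]

variable [TopologicalSpace X] {K : Set X}

theorem exists_norm_combination_le (hf : Continuous fun p : ℝ × X => f p.1 p.2)
    (hg : Continuous fun p : ℝ × X => g p.1 p.2) (hK : IsCompact K) :
    ∃ C > 0, ∀ μ ∈ K, ∀ x ∈ Icc (0:ℝ) 1, ∀ c d : ℂ,
      ‖c * f x μ + d * g x μ‖ ≤ C * ‖(c, d)‖ := by
  obtain ⟨C, hC⟩ := (isCompact_Icc.prod hK).exists_bound_of_continuousOn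
    (hf.norm.add hg.norm).continuousOn
  refine ⟨max C 1, by positivity, fun μ hμ x hx c d => ?_⟩
  have hfg : ‖f x μ‖ + ‖g x μ‖ ≤ C := by
    simpa only [Pi.add_apply, Real.norm_of_nonneg (add_nonneg (norm_nonneg _) (norm_nonneg _))]
      using hC (x, μ) ⟨hx, hμ⟩
  calc ‖c * f x μ + d * g x μ‖ ≤ ‖c‖ * ‖f x μ‖ + ‖d‖ * ‖g x μ‖ := by
        simpa only [norm_mul] using norm_add_le (c * f x μ) (d * g x μ)
    _ ≤ ‖(c, d)‖ * ‖f x μ‖ + ‖(c, d)‖ * ‖g x μ‖ := by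
        gcongr
        exacts [norm_fst_le (c, d), norm_snd_le (c, d)]
    _ ≤ max C 1 * ‖(c, d)‖ := by
        rw [← mul_add, mul_comm]
        gcongr
        exact hfg.trans (le_max_left _ _)

theorem integral_norm_sq_combination_pos (hf : Continuous fun p : ℝ × X => f p.1 p.2)
    (hg : Continuous fun p : ℝ × X => g p.1 p.2) {μ : X} {c d : ℂ}
    (hind : (∀ x ∈ Icc (0:ℝ) 1, c * f x μ + d * g x μ = 0) → c = 0 ∧ d = 0)
    (hcd : (c, d) ≠ 0) :
    0 < ∫ x in (0:ℝ)..1, ‖c * f x μ + d * g x μ‖ ^ 2 := by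
  have hcont : Continuous fun x => c * f x μ + d * g x μ := by fun_prop
  obtain ⟨x, hx, hne⟩ : ∃ x ∈ Icc (0:ℝ) 1, c * f x μ + d * g x μ ≠ 0 := by
    by_contra! h
    exact hcd (Prod.ext_iff.2 (hind h))
  exact intervalIntegral.integral_pos zero_lt_one (hcont.norm.pow 2).continuousOn
    (fun _ _ => by positivity) ⟨x, hx, by positivity⟩

theorem exists_pos_mul_norm_sq_le_integral (hf : Continuous fun p : ℝ × X => f p.1 p.2)
    (hg : Continuous fun p : ℝ × X => g p.1 p.2) (hK : IsCompact K)
    (hind : ∀ μ ∈ K, ∀ c d : ℂ, (∀ x ∈ Icc (0:ℝ) 1, c * f x μ + d * g x μ = 0) → c = 0 ∧ d = 0) :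
    ∃ ε > 0, ∀ μ ∈ K, ∀ c d : ℂ,
      ε * ‖(c, d)‖ ^ 2 ≤ ∫ x in (0:ℝ)..1, ‖c * f x μ + d * g x μ‖ ^ 2 := by
  set N : X × ℂ × ℂ → ℝ := fun p => ∫ x in (0:ℝ)..1, ‖p.2.1 * f x p.1 + p.2.2 * g x p.1‖ ^ 2
  have hN : Continuous N :=
    intervalIntegral.continuous_parametric_intervalIntegral_of_continuous' (by fun_prop) 0 1
  rcases K.eq_empty_or_nonempty with rfl | ⟨μ₀, hμ₀⟩
  · exact ⟨1, one_pos, by simp⟩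
  -- `N` is homogeneous of degree two in `(c, d)`, so it suffices to bound it on the unit sphere.
  obtain ⟨p, ⟨hpK, hp⟩, hpmin⟩ := (hK.prod (isCompact_sphere (0 : ℂ × ℂ) 1)).exists_isMinOn
    ⟨(μ₀, (1, 0)), hμ₀, by simp [Prod.norm_def]⟩ hN.continuousOn
  have hp0 : p.2 ≠ 0 := ne_zero_of_mem_unit_sphere ⟨p.2, hp⟩
  refine ⟨N p, integral_norm_sq_combination_pos hf hg (hind _ hpK _ _) hp0, fun μ hμ c d => ?_⟩
  rcases eq_or_ne (c, d) 0 with hcd | hcd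
  · simpa [hcd] using intervalIntegral.integral_nonneg zero_le_one fun x _ =>
      sq_nonneg ‖c * f x μ + d * g x μ‖
  set r : ℂ := (‖(c, d)‖ : ℂ)
  have hr : r ≠ 0 := Complex.ofReal_ne_zero.2 (norm_ne_zero_iff.2 hcd)
  have hunit : ‖(r⁻¹ * c, r⁻¹ * d)‖ = 1 := by
    rw [← smul_eq_mul, ← smul_eq_mul, ← Prod.smul_mk, norm_smul, norm_inv, Complex.norm_real,
      norm_norm, inv_mul_cancel₀ (norm_ne_zero_iff.2 hcd)]
  have hmin := isMinOn_iff.1 hpmin (μ, (r⁻¹ * c, r⁻¹ * d)) ⟨hμ, mem_sphere_zero_iff_norm.2 hunit⟩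
  calc N p * ‖(c, d)‖ ^ 2 ≤ ‖r‖ ^ 2 * N (μ, (r⁻¹ * c, r⁻¹ * d)) := by
        rw [Complex.norm_real, norm_norm, mul_comm]
        gcongr
    _ = ∫ x in (0:ℝ)..1, ‖c * f x μ + d * g x μ‖ ^ 2 := by
        rw [← integral_norm_sq_smul_combination, mul_inv_cancel_left₀ hr, mul_inv_cancel_left₀ hr]

theorem exists_norm_combination_div_l2norm_le (hf : Continuous fun p : ℝ × X => f p.1 p.2)
    (hg : Continuous fun p : ℝ × X => g p.1 p.2) (hK : IsCompact K)
    (hind : ∀ μ ∈ K, ∀ c d : ℂ, (∀ x ∈ Icc (0:ℝ) 1, c * f x μ + d * g x μ = 0) → c = 0 ∧ d = 0) :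
    ∃ M > 0, ∀ μ ∈ K, ∀ c d : ℂ, (c, d) ≠ 0 →
      l2norm (fun x => c * f x μ + d * g x μ) ≠ 0 ∧
      ∀ x ∈ Icc (0:ℝ) 1, ‖c * f x μ + d * g x μ‖ / l2norm (fun x => c * f x μ + d * g x μ) ≤ M := by
  obtain ⟨C, hC, hupper⟩ := exists_norm_combination_le hf hg hK
  obtain ⟨ε, hε, hlower⟩ := exists_pos_mul_norm_sq_le_integral hf hg hK hind
  refine ⟨C / √ε, by positivity, fun μ hμ c d hcd => ?_⟩
  have hnorm : 0 < ‖(c, d)‖ := norm_pos_iff.2 hcd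
  have hl2 : √ε * ‖(c, d)‖ ≤ l2norm (fun x => c * f x μ + d * g x μ) := by
    rw [l2norm, ← Real.sqrt_sq hnorm.le, ← Real.sqrt_mul hε.le]
    exact Real.sqrt_le_sqrt (hlower μ hμ c d)
  have hl2pos : 0 < l2norm (fun x => c * f x μ + d * g x μ) :=
    lt_of_lt_of_le (by positivity) hl2
  refine ⟨hl2pos.ne', fun x hx => ?_⟩
  calc ‖c * f x μ + d * g x μ‖ / l2norm (fun x => c * f x μ + d * g x μ)
      ≤ C * ‖(c, d)‖ / (√ε * ‖(c, d)‖) :=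
        div_le_div₀ (by positivity) (hupper μ hμ x hx c d) (by positivity) hl2
    _ = C / √ε := mul_div_mul_right _ _ hnorm.ne'

end Combination

theorem IsHillSolution.deriv_zero_eq_zero_of_eqOn_zero {q : ℝ → ℂ} {lam : ℂ} {y yd : ℝ → ℂ}
    (hy : IsHillSolution q lam y yd) (h0 : ∀ x ∈ Icc (0:ℝ) 1, y x = 0) : yd 0 = 0 := by
  have hsub : ∀ x ∈ Icc (0:ℝ) 1, uIcc 0 x ⊆ Icc 0 1 := fun x hx =>
    uIcc_subset_Icc (left_mem_Icc.2 zero_le_one) hx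
  have hyd : ∀ x ∈ Icc (0:ℝ) 1, yd x = yd 0 := fun x hx => by
    rw [hy.yd_eq x hx, intervalIntegral.integral_congr (g := fun _ => 0) fun s hs => by
      simp [h0 s (hsub x hx hs)]]
    simp
  have h1 := hy.y_eq 1 (right_mem_Icc.2 zero_le_one)
  rw [h0 1 (right_mem_Icc.2 zero_le_one), h0 0 (left_mem_Icc.2 zero_le_one),
    intervalIntegral.integral_congr (g := fun _ => yd 0) fun s hs =>
      hyd s (hsub 1 (right_mem_Icc.2 zero_le_one) hs)] at h1
  simpa using h1.symm

theorem HillContext.eq_zero_of_combination_θ_φ_eq_zero (H : HillContext) (μ c d : ℂ)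
    (h : ∀ x ∈ Icc (0:ℝ) 1, c * H.θ x μ + d * H.φ x μ = 0) : c = 0 ∧ d = 0 := by
  have hc : c = 0 := by simpa [H.θ_init, H.φ_init] using h 0 (left_mem_Icc.2 zero_le_one)
  refine ⟨hc, by_contra fun hd => ?_⟩
  have hφ : ∀ x ∈ Icc (0:ℝ) 1, H.φ x μ = 0 := fun x hx => by simpa [hc, hd] using h x hx
  simpa [H.φd_init] using (H.sol_φ μ).deriv_zero_eq_zero_of_eqOn_zero hφ

theorem Psi_bounded_near_zero_general (H : HillContext) (δ₀ : ℝ) (hδ₀ : 0 < δ₀)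
    (lamn : ℝ → ℂ) (hcont : ContinuousOn lamn (Ioo (-δ₀) δ₀))
    (hF : ∀ t ∈ Ioo (-δ₀) δ₀, H.F (lamn t) = 2 * (Real.cos t : ℂ))
    (hθ0 : H.θ 1 (lamn 0) = 1) (hφd0 : H.φd 1 (lamn 0) = 1)
    (hφ_ne : ∃ mu : ℂ, H.φ 1 mu ≠ 0) :
    ∃ δ M : ℝ, 0 < δ ∧ δ ≤ δ₀ ∧ 0 < M ∧
      ∀ t : ℝ, 0 < |t| → |t| < δ →
        H.φ 1 (lamn t) ≠ 0 ∧
        l2norm (fun s => H.Phi t s (lamn t)) ≠ 0 ∧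
        ∀ x ∈ Icc (0:ℝ) 1,
          ‖H.Phi t x (lamn t)‖ / l2norm (fun s => H.Phi t s (lamn t)) ≤ M := by
  obtain ⟨M, hM, hbound⟩ := exists_norm_combination_div_l2norm_le H.θ_cont H.φ_cont
    (isCompact_closedBall (lamn 0) 1) fun μ _ => H.eq_zero_of_combination_θ_φ_eq_zero μ
  have hδ₀nhds : Ioo (-δ₀) δ₀ ∈ 𝓝 (0:ℝ) := Ioo_mem_nhds (neg_neg_of_pos hδ₀) hδ₀
  have hlim : Tendsto lamn (𝓝 0) (𝓝 (lamn 0)) := hcont.continuousAt hδ₀nhds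
  have hne : ∀ᶠ t in 𝓝[≠] 0, lamn t ≠ lamn 0 := by
    filter_upwards [nhdsWithin_le_nhds hδ₀nhds, eventually_nhdsNE_zero_cos_ne_one]
      with t ht hcos heq
    have hFt := hF t ht
    rw [heq, HillContext.F, hθ0, hφd0] at hFt
    exact hcos (by exact_mod_cast (by linear_combination -hFt / 2 : (Real.cos t : ℂ) = 1))
  have hφ : ∀ᶠ t in 𝓝[≠] 0, H.φ 1 (lamn t) ≠ 0 :=
    (tendsto_nhdsWithin_of_tendsto_nhds_of_eventually_within _
      (hlim.mono_left nhdsWithin_le_nhds) hne).eventually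
      ((H.φ_entire 1).eventually_nhdsNE_ne_zero hφ_ne _)
  have hK : ∀ᶠ t in 𝓝[≠] 0, lamn t ∈ Metric.closedBall (lamn 0) 1 :=
    nhdsWithin_le_nhds (hlim (Metric.closedBall_mem_nhds _ one_pos))
  obtain ⟨δ, hδ, hsmall⟩ := Metric.eventually_nhds_iff.1 (eventually_nhdsWithin_iff.1 (hφ.and hK))
  refine ⟨min δ δ₀, M, lt_min hδ hδ₀, min_le_right _ _, hM, fun t ht0 htδ => ?_⟩
  obtain ⟨hφt, hKt⟩ := hsmall (by simpa [Real.dist_eq] using htδ.trans_le (min_le_left _ _))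
    (abs_pos.1 ht0)
  exact ⟨hφt, hbound _ hKt _ _ fun h => hφt (Prod.ext_iff.1 h).1⟩

/-- (Lemma 1(c).)  Let `λ_n : (-δ₀,δ₀) → ℂ` be continuous with `F(λ_n(t)) = 2 cos t`, let
`λ₀ = λ_n(0)` and suppose the geometric multiplicity of `λ₀` as an eigenvalue of the
periodic problem `L₀` is `2`, i.e. `φ(1,λ₀) = 0`, `θ'(1,λ₀) = 0`, `θ(1,λ₀) = φ'(1,λ₀) = 1`.
Assume `φ(1,·)` is not identically zero.  Then there exist `δ > 0` and `M > 0` such that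
for all real `t` with `0 < |t| < δ` one has `φ(1,λ_n(t)) ≠ 0`, `∥Φ_t(·,λ_n(t))∥ ≠ 0` and
`|Φ_t(x,λ_n(t))| / ∥Φ_t(·,λ_n(t))∥ ≤ M` for all `x ∈ [0,1]`: the normalized eigenfunction
is bounded on a punctured neighborhood of `t = 0`. -/
theorem Psi_bounded_near_zero (H : HillContext) (δ₀ : ℝ) (hδ₀ : 0 < δ₀)
    (lamn : ℝ → ℂ) (hcont : ContinuousOn lamn (Ioo (-δ₀) δ₀))
    (hF : ∀ t ∈ Ioo (-δ₀) δ₀, H.F (lamn t) = 2 * (Real.cos t : ℂ))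
    (hφ0 : H.φ 1 (lamn 0) = 0) (hθd0 : H.θd 1 (lamn 0) = 0)
    (hθ0 : H.θ 1 (lamn 0) = 1) (hφd0 : H.φd 1 (lamn 0) = 1)
    (hφ_ne : ∃ mu : ℂ, H.φ 1 mu ≠ 0) :
    ∃ δ M : ℝ, 0 < δ ∧ δ ≤ δ₀ ∧ 0 < M ∧
      ∀ t : ℝ, 0 < |t| → |t| < δ →
        H.φ 1 (lamn t) ≠ 0 ∧
        l2norm (fun s => H.Phi t s (lamn t)) ≠ 0 ∧
        ∀ x ∈ Icc (0:ℝ) 1,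
          ‖H.Phi t x (lamn t)‖ / l2norm (fun s => H.Phi t s (lamn t)) ≤ M :=
  Psi_bounded_near_zero_general H δ₀ hδ₀ lamn hcont hF hθ0 hφd0 hφ_ne

end
end

section
/- Let t₀ ∈ (0,π), m ≥ 2, and let λ₀ ∈ ℂ be an eigenvalue of L_{t₀} of multiplicity m, i.e. F(λ₀) = 2cos t₀, F^{(j)}(λ₀) = 0 for 1 ≤ j ≤ m−1, and F^{(m)}(λ₀) ≠ 0. Let λ_k : I → ℂ be continuous on an open real interval I containing t₀, with λ_k(t₀) = λ₀ and F(λ_k(t)) = 2cos t for all t ∈ I. Then there exist δ, c₁, c₂ > 0 such that c₁|t − t₀|^{1/m} ≤ |λ_k(t) − λ₀| ≤ c₂|t − t₀|^{1/m} for all t ∈ I with 0 < |t − t₀| ≤ δ; moreover, after shrinking δ, F'(λ_k(t)) ≠ 0 for 0 < |t − t₀| ≤ δ (so λ_k(t) is a simple eigenvalue of L_t). -/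
open MeasureTheory Set
open scoped Real Classical

noncomputable section

/-!
Near `λ₀` the discriminant behaves like `F(λ) - F(λ₀) ≍ (λ - λ₀)^m`, because `λ₀` is a zero of
order exactly `m` of `F - F(λ₀)`; near `t₀ ∈ (0, π)` the right-hand side behaves like
`2 cos t - 2 cos t₀ ≍ t - t₀`, because `sin t₀ ≠ 0`. Along the branch these combine to
`‖λ_k(t) - λ₀‖^m ≍ |t - t₀|`, and taking `m`-th roots gives the two-sided bound. Simplicity
follows from isolated zeros: `F'` is analytic and not identically zero near `λ₀`, while
`λ_k(t) ≠ λ₀` for `t ≠ t₀` by the lower bound.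
-/

open Filter Topology Asymptotics

theorem Asymptotics.IsTheta.exists_pos_eventually_bounds {α E F : Type*}
    [SeminormedAddCommGroup E] [SeminormedAddCommGroup F]
    {l : Filter α} {f : α → E} {g : α → F} (h : f =Θ[l] g) :
    ∃ c₁ > 0, ∃ c₂ > 0, ∀ᶠ x in l, c₁ * ‖g x‖ ≤ ‖f x‖ ∧ ‖f x‖ ≤ c₂ * ‖g x‖ := by
  obtain ⟨c₂, hc₂, hf⟩ := h.1.exists_pos
  obtain ⟨c, hc, hg⟩ := h.2.exists_pos
  refine ⟨c⁻¹, inv_pos.mpr hc, c₂, hc₂, ?_⟩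
  filter_upwards [hf.bound, hg.bound] with x hfx hgx
  exact ⟨by rwa [inv_mul_le_iff₀ hc], hfx⟩

theorem exists_forall_abs_sub_le_of_eventually_nhdsNE {P : ℝ → Prop} {t₀ : ℝ}
    (h : ∀ᶠ t in 𝓝[≠] t₀, P t) :
    ∃ δ, 0 < δ ∧ ∀ t, 0 < |t - t₀| → |t - t₀| ≤ δ → P t := by
  obtain ⟨ε, hε, hP⟩ := Metric.eventually_nhds_iff.mp (eventually_nhdsWithin_iff.mp h)
  refine ⟨ε / 2, by positivity, fun t ht htδ ↦ hP ?_ ?_⟩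
  · rw [Real.dist_eq]
    linarith
  · exact sub_ne_zero.mp (abs_pos.mp ht)

section AnalyticOrder

variable {𝕜 E : Type*} [NontriviallyNormedField 𝕜] [NormedAddCommGroup E] [NormedSpace 𝕜 E]
  {f : 𝕜 → E} {z₀ : 𝕜} {n : ℕ}

theorem AnalyticAt.sub_isTheta_pow_of_analyticOrderAt_sub_eq (hf : AnalyticAt 𝕜 f z₀)
    (hn : analyticOrderAt (f · - f z₀) z₀ = n) :
    (f · - f z₀) =Θ[𝓝 z₀] fun z ↦ (z - z₀) ^ n := by
  obtain ⟨g, hg, hg₀, hfg⟩ :=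
    ((hf.fun_sub analyticAt_const).analyticOrderAt_eq_natCast).mp hn
  have hg_one : g =Θ[𝓝 z₀] fun _ ↦ (1 : 𝕜) :=
    ((isEquivalent_const_iff_tendsto hg₀).mpr hg.continuousAt.tendsto).isTheta.trans
      (isTheta_const_const hg₀ one_ne_zero)
  refine EventuallyEq.trans_isTheta hfg ?_
  simpa using (isTheta_rfl (f := fun z ↦ (z - z₀) ^ n)).smul hg_one

theorem AnalyticAt.norm_sub_isTheta_rpow_of_comp_sub_isTheta {α : Type*} {l : Filter α}
    {v : α → 𝕜} {u : α → ℝ} (hf : AnalyticAt 𝕜 f z₀) (hn₀ : n ≠ 0)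
    (hn : analyticOrderAt (f · - f z₀) z₀ = n) (hv : Tendsto v l (𝓝 z₀))
    (hfv : (fun t ↦ f (v t) - f z₀) =Θ[l] u) :
    (fun t ↦ ‖v t - z₀‖) =Θ[l] fun t ↦ |u t| ^ ((1 : ℝ) / n) := by
  have hf_pow := hf.sub_isTheta_pow_of_analyticOrderAt_sub_eq hn
  have hpow : (fun t ↦ (v t - z₀) ^ n) =Θ[l] u :=
    IsTheta.trans ⟨hf_pow.2.comp_tendsto hv, hf_pow.1.comp_tendsto hv⟩ hfv
  have hnorm_pow : (fun t ↦ ‖v t - z₀‖ ^ n) =Θ[l] fun t ↦ |u t| := by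
    simpa only [norm_pow, ← Real.norm_eq_abs] using hpow.norm_left.norm_right
  have hroot := hnorm_pow.rpow (r := (1 : ℝ) / n) (.of_forall fun _ ↦ by positivity)
    (.of_forall fun _ ↦ abs_nonneg _)
  simpa only [one_div, Real.pow_rpow_inv_natCast (norm_nonneg _) hn₀] using hroot

variable [CharZero 𝕜] [CompleteSpace E]

theorem AnalyticAt.analyticOrderAt_sub_eq_of_iteratedDeriv (hf : AnalyticAt 𝕜 f z₀)
    (hn : n ≠ 0) (hlt : ∀ k, 0 < k → k < n → iteratedDeriv k f z₀ = 0)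
    (hne : iteratedDeriv n f z₀ ≠ 0) :
    analyticOrderAt (f · - f z₀) z₀ = n := by
  have hsub : ∀ k, 0 < k → iteratedDeriv k (f · - f z₀) z₀ = iteratedDeriv k f z₀ := by
    intro k hk
    simpa only [neg_add_eq_sub] using iteratedDeriv_const_add hk (-f z₀) (f := f) (x := z₀)
  refine (analyticOrderAt_eq_nat_iff_iteratedDeriv_eq_zero (hf.fun_sub analyticAt_const)).mpr
    ⟨fun k hk ↦ ?_, by rwa [hsub n (Nat.pos_of_ne_zero hn)]⟩
  rcases Nat.eq_zero_or_pos k with rfl | hk₀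
  · simp
  · rw [hsub k hk₀, hlt k hk₀ hk]

theorem AnalyticAt.eventually_deriv_ne_zero_of_analyticOrderAt_sub_eq (hf : AnalyticAt 𝕜 f z₀)
    (hn : analyticOrderAt (f · - f z₀) z₀ = n) :
    ∀ᶠ z in 𝓝[≠] z₀, deriv f z ≠ 0 := by
  have hderiv : deriv (f · - f z₀) = deriv f := funext fun z ↦ deriv_sub_const (f z₀)
  refine hf.deriv.eventually_eq_zero_or_eventually_ne_zero.resolve_left fun hzero ↦ ?_
  have htop : analyticOrderAt (deriv (f · - f z₀)) z₀ = ⊤ := by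
    rwa [hderiv, analyticOrderAt_eq_top]
  rw [analyticOrderAt_deriv_eq_top_iff_of_eq_zero (hf.fun_sub analyticAt_const) (sub_self _),
    hn] at htop
  exact ENat.natCast_ne_top n htop

theorem AnalyticAt.eventually_norm_sub_bounds_and_deriv_ne_zero {v : ℝ → 𝕜} {t₀ : ℝ}
    (hf : AnalyticAt 𝕜 f z₀) (hn₀ : n ≠ 0) (hn : analyticOrderAt (f · - f z₀) z₀ = n)
    (hv : Tendsto v (𝓝 t₀) (𝓝 z₀)) (hfv : (fun t ↦ f (v t) - f z₀) =Θ[𝓝 t₀] fun t ↦ t - t₀) :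
    ∃ c₁ > 0, ∃ c₂ > 0, ∀ᶠ t in 𝓝[≠] t₀,
      (c₁ * |t - t₀| ^ ((1 : ℝ) / n) ≤ ‖v t - z₀‖ ∧ ‖v t - z₀‖ ≤ c₂ * |t - t₀| ^ ((1 : ℝ) / n)) ∧
      deriv f (v t) ≠ 0 := by
  obtain ⟨c₁, hc₁, c₂, hc₂, hbounds⟩ :=
    (hf.norm_sub_isTheta_rpow_of_comp_sub_isTheta hn₀ hn hv hfv).exists_pos_eventually_bounds
  have hbounds' : ∀ᶠ t in 𝓝[≠] t₀, c₁ * |t - t₀| ^ ((1 : ℝ) / n) ≤ ‖v t - z₀‖ ∧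
      ‖v t - z₀‖ ≤ c₂ * |t - t₀| ^ ((1 : ℝ) / n) :=
    (hbounds.filter_mono nhdsWithin_le_nhds).mono fun t ht ↦ by
      simpa only [norm_norm, Real.norm_of_nonneg (Real.rpow_nonneg (abs_nonneg _) _)] using ht
  have hv_ne : ∀ᶠ t in 𝓝[≠] t₀, v t ∈ ({z₀}ᶜ : Set 𝕜) := by
    filter_upwards [hbounds', self_mem_nhdsWithin] with t ht htne hvt
    have hpos : 0 < c₁ * |t - t₀| ^ ((1 : ℝ) / n) := by
      have := sub_ne_zero.mpr htne
      positivity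
    rw [Set.mem_singleton_iff.mp hvt, sub_self, norm_zero] at ht
    linarith [ht.1]
  have hv' : Tendsto v (𝓝[≠] t₀) (𝓝[≠] z₀) :=
    tendsto_nhdsWithin_iff.mpr ⟨hv.mono_left nhdsWithin_le_nhds, hv_ne⟩
  exact ⟨c₁, hc₁, c₂, hc₂,
    hbounds'.and (hv'.eventually (hf.eventually_deriv_ne_zero_of_analyticOrderAt_sub_eq hn))⟩

end AnalyticOrder

theorem two_mul_ofReal_cos_sub_isTheta {t₀ : ℝ} (h : Real.sin t₀ ≠ 0) :
    (fun t : ℝ ↦ 2 * (Real.cos t : ℂ) - 2 * (Real.cos t₀ : ℂ)) =Θ[𝓝 t₀] fun t ↦ t - t₀ := by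
  have horder : analyticOrderAt (Real.cos · - Real.cos t₀) t₀ = (1 : ℕ) :=
    Real.analyticAt_cos.analyticOrderAt_sub_eq_one_of_deriv_ne_zero (by simpa using h)
  have hcos : (Real.cos · - Real.cos t₀) =Θ[𝓝 t₀] fun t ↦ t - t₀ := by
    simpa using Real.analyticAt_cos.sub_isTheta_pow_of_analyticOrderAt_sub_eq horder
  have hcast : ∀ t : ℝ, 2 * (Real.cos t : ℂ) - 2 * (Real.cos t₀ : ℂ) =
      ((2 * (Real.cos t - Real.cos t₀) : ℝ) : ℂ) := fun t ↦ by push_cast; ring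
  refine IsTheta.of_norm_left ?_
  simpa only [hcast, Complex.norm_real, isTheta_norm_left,
    isTheta_const_mul_left (two_ne_zero : (2 : ℝ) ≠ 0)] using hcos

theorem HillContext.differentiable_F (H : HillContext) : Differentiable ℂ H.F :=
  (H.θ_entire 1).add (H.φd_entire 1)

/-- (Proposition 3(a), case `t₀ ≠ 0, π`.)  Let `t₀ ∈ (0,π)`, `m ≥ 2` and let `λ₀` be an
eigenvalue of `L_{t₀}` of multiplicity `m`: `F(λ₀) = 2 cos t₀`, `F⁽ʲ⁾(λ₀) = 0` for
`1 ≤ j ≤ m-1`, `F⁽ᵐ⁾(λ₀) ≠ 0`.  If `λ_k` is a continuous branch on an open interval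
`(a,b) ∋ t₀` with `λ_k(t₀) = λ₀` and `F(λ_k(t)) = 2 cos t`, then
`λ_k(t) - λ₀ ∼ (t - t₀)^{1/m}` as `t → t₀`, and for `t` near (but distinct from) `t₀` the
eigenvalue `λ_k(t)` is simple, i.e. `F'(λ_k(t)) ≠ 0`. -/
theorem eigenvalue_branch_asymptotics_interior (H : HillContext)
    (t₀ : ℝ) (ht₀ : t₀ ∈ Ioo 0 π) (m : ℕ) (hm : 2 ≤ m) (lam₀ : ℂ)
    (hF0 : H.F lam₀ = 2 * (Real.cos t₀ : ℂ))
    (hFj : ∀ j : ℕ, 1 ≤ j → j ≤ m - 1 → iteratedDeriv j H.F lam₀ = 0)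
    (hFm : iteratedDeriv m H.F lam₀ ≠ 0)
    (a b : ℝ) (ha : a < t₀) (hb : t₀ < b)
    (lamk : ℝ → ℂ) (hcont : ContinuousOn lamk (Ioo a b))
    (hk0 : lamk t₀ = lam₀)
    (hFk : ∀ t ∈ Ioo a b, H.F (lamk t) = 2 * (Real.cos t : ℂ)) :
    ∃ δ c₁ c₂ : ℝ, 0 < δ ∧ 0 < c₁ ∧ 0 < c₂ ∧
      (∀ t ∈ Ioo a b, 0 < |t - t₀| → |t - t₀| ≤ δ →
        c₁ * |t - t₀| ^ ((1 : ℝ) / (m : ℝ)) ≤ ‖lamk t - lam₀‖ ∧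
        ‖lamk t - lam₀‖ ≤ c₂ * |t - t₀| ^ ((1 : ℝ) / (m : ℝ))) ∧
      ∃ δ' : ℝ, 0 < δ' ∧ δ' ≤ δ ∧
        ∀ t ∈ Ioo a b, 0 < |t - t₀| → |t - t₀| ≤ δ' → deriv H.F (lamk t) ≠ 0 := by
  have hm₀ : m ≠ 0 := by omega
  have hFan : AnalyticAt ℂ H.F lam₀ := H.differentiable_F.analyticAt lam₀
  have horder : analyticOrderAt (H.F · - H.F lam₀) lam₀ = m :=
    hFan.analyticOrderAt_sub_eq_of_iteratedDeriv hm₀ (fun k hk hkm ↦ hFj k hk (by omega)) hFm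
  have hI : Ioo a b ∈ 𝓝 t₀ := Ioo_mem_nhds ha hb
  have hdisc : (fun t ↦ H.F (lamk t) - H.F lam₀) =Θ[𝓝 t₀] fun t ↦ t - t₀ := by
    refine EventuallyEq.trans_isTheta ?_
      (two_mul_ofReal_cos_sub_isTheta (Real.sin_pos_of_pos_of_lt_pi ht₀.1 ht₀.2).ne')
    filter_upwards [hI] with t ht
    rw [hFk t ht, hF0]
  obtain ⟨c₁, hc₁, c₂, hc₂, hnear⟩ := hFan.eventually_norm_sub_bounds_and_deriv_ne_zero hm₀ horder
    (hk0 ▸ hcont.continuousAt hI) hdisc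
  obtain ⟨δ, hδ, hδnear⟩ := exists_forall_abs_sub_le_of_eventually_nhdsNE hnear
  exact ⟨δ, c₁, c₂, hδ, hc₁, hc₂, fun t _ h₁ h₂ ↦ (hδnear t h₁ h₂).1,
    δ, hδ, le_rfl, fun t _ h₁ h₂ ↦ (hδnear t h₁ h₂).2⟩
end
end

section
/- Let t₀ ∈ {0, π}, m ≥ 2, and let λ₀ ∈ ℂ be an eigenvalue of L_{t₀} of multiplicity m, i.e. F(λ₀) = 2cos t₀, F^{(j)}(λ₀) = 0 for 1 ≤ j ≤ m−1, and F^{(m)}(λ₀) ≠ 0. Let λ_k : I → ℂ be continuous on an open real interval I containing t₀, with λ_k(t₀) = λ₀ and F(λ_k(t)) = 2cos t for all t ∈ I. Then there exist δ, c₁, c₂ > 0 such that c₁|t − t₀|^{2/m} ≤ |λ_k(t) − λ₀| ≤ c₂|t − t₀|^{2/m} for all t ∈ I with 0 < |t − t₀| ≤ δ; moreover, after shrinking δ, F'(λ_k(t)) ≠ 0 for 0 < |t − t₀| ≤ δ (so λ_k(t) is a simple eigenvalue of L_t). -/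
open MeasureTheory Set
open scoped Real Classical

noncomputable section

/-!
Since `λ₀` is a zero of order exactly `m` of `F - F(λ₀)`, we have `F(λ) - F(λ₀) ≍ (λ - λ₀)^m`
near `λ₀`, and since `sin t₀ = 0`, `2 cos t - 2 cos t₀ ≍ (t - t₀)^2` near `t₀`. Along the branch
these two quantities coincide, so `|λ_k(t) - λ₀|^m ≍ |t - t₀|^2`, and taking `m`-th roots gives
the two-sided bound. As for simplicity of `λ_k(t)`: `F'` is analytic and not identically zero near `λ₀` (its
`(m-1)`-st derivative there is `F⁽ᵐ⁾(λ₀) ≠ 0`), so it has no zeros in a punctured neighbourhood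
of `λ₀`, which the branch enters for `t ≠ t₀` close to `t₀` by the lower bound.
-/

open Filter Topology Asymptotics

theorem Asymptotics.IsTheta.comp_tendsto {α β E F : Type*} [Norm E] [Norm F] {f : β → E}
    {g : β → F} {l : Filter β} {l' : Filter α} {u : α → β} (h : f =Θ[l] g) (hu : Tendsto u l' l) :
    (f ∘ u) =Θ[l'] (g ∘ u) :=
  ⟨h.1.comp_tendsto hu, h.2.comp_tendsto hu⟩

theorem Asymptotics.IsTheta.norm_rpow_of_pow {α 𝕜 𝕜' : Type*} [NormedField 𝕜] [NormedField 𝕜']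
    {l : Filter α} {u : α → 𝕜} {v : α → 𝕜'} {m n : ℕ} (hm : m ≠ 0)
    (h : (fun x => u x ^ m) =Θ[l] fun x => v x ^ n) :
    (fun x => ‖u x‖) =Θ[l] fun x => ‖v x‖ ^ ((n : ℝ) / m) := by
  have hnorm : (fun x => ‖u x‖ ^ m) =Θ[l] fun x => ‖v x‖ ^ n := by
    simpa only [norm_pow] using h.norm_left.norm_right
  have hroot := hnorm.rpow (r := (m : ℝ)⁻¹) (Eventually.of_forall fun x => by positivity)
    (Eventually.of_forall fun x => by positivity)
  refine (EventuallyEq.isTheta (Eventually.of_forall fun x => ?_)).trans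
    (hroot.trans_eventuallyEq (Eventually.of_forall fun x => ?_))
  · exact (Real.pow_rpow_inv_natCast (norm_nonneg _) hm).symm
  · simp only
    rw [← Real.rpow_natCast, ← Real.rpow_mul (norm_nonneg _), div_eq_mul_inv]

theorem Asymptotics.IsTheta.exists_pos_bounds {α E : Type*} [SeminormedAddCommGroup E]
    {l : Filter α} {f : α → E} {g : α → ℝ} (h : f =Θ[l] g) (hg : 0 ≤ᶠ[l] g) :
    ∃ c₁ > 0, ∃ c₂ > 0, ∀ᶠ x in l, c₁ * g x ≤ ‖f x‖ ∧ ‖f x‖ ≤ c₂ * g x := by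
  obtain ⟨c₂, hc₂, hupper⟩ := h.1.exists_pos
  obtain ⟨C, hC, hlower⟩ := h.2.exists_pos
  refine ⟨C⁻¹, inv_pos.mpr hC, c₂, hc₂, ?_⟩
  filter_upwards [hupper.bound, hlower.bound, hg] with x hux hlx hx
  rw [Real.norm_of_nonneg hx] at hux hlx
  exact ⟨by rwa [inv_mul_le_iff₀ hC], hux⟩

theorem exists_pos_forall_abs_sub_le_of_eventually_nhdsNE {p : ℝ → Prop} {t₀ : ℝ}
    (h : ∀ᶠ t in 𝓝[≠] t₀, p t) : ∃ δ > 0, ∀ t, 0 < |t - t₀| → |t - t₀| ≤ δ → p t := by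
  obtain ⟨ε, hε, hball⟩ := Metric.eventually_nhds_iff.mp (eventually_nhdsWithin_iff.mp h)
  refine ⟨ε / 2, half_pos hε, fun t ht ht' => hball ?_ ?_⟩
  · rw [Real.dist_eq]; linarith
  · simpa [sub_eq_zero] using ht.ne'

section Analytic

variable {𝕜 E : Type*} [NontriviallyNormedField 𝕜] [NormedAddCommGroup E] [NormedSpace 𝕜 E]
  {f : 𝕜 → E} {z₀ : 𝕜}

theorem AnalyticAt.isTheta_pow_of_analyticOrderAt_eq {n : ℕ} (hf : AnalyticAt 𝕜 f z₀)
    (hn : analyticOrderAt f z₀ = n) : f =Θ[𝓝 z₀] fun z => (z - z₀) ^ n := by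
  obtain ⟨g, hg, hg₀, hfg⟩ := hf.analyticOrderAt_eq_natCast.mp hn
  have hg_one : g =Θ[𝓝 z₀] fun _ => (1 : 𝕜) :=
    ⟨isBigO_const_of_tendsto hg.continuousAt.tendsto one_ne_zero,
      (isBigO_const_left_iff_pos_le_norm one_ne_zero).mpr ⟨‖g z₀‖ / 2, by positivity,
        (hg.continuousAt.norm.eventually_const_lt (half_lt_self (norm_pos_iff.mpr hg₀))).mono
          fun _ => le_of_lt⟩⟩
  simpa using (show f =ᶠ[𝓝 z₀] _ from hfg).trans_isTheta
    ((isTheta_refl (fun z => (z - z₀) ^ n) _).smul hg_one)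

variable [CharZero 𝕜] [CompleteSpace E]

theorem AnalyticAt.analyticOrderAt_sub_eq_of_iteratedDeriv_s6 {m : ℕ} (hf : AnalyticAt 𝕜 f z₀)
    (hm : 0 < m) (hvanish : ∀ j, 0 < j → j < m → iteratedDeriv j f z₀ = 0)
    (hder : iteratedDeriv m f z₀ ≠ 0) :
    analyticOrderAt (fun z => f z - f z₀) z₀ = m := by
  have hsub : ∀ j, 0 < j → iteratedDeriv j (fun z => f z - f z₀) z₀ = iteratedDeriv j f z₀ :=
    fun j hj => by
      rw [iteratedDeriv_fun_sub hf.contDiffAt contDiffAt_const, iteratedDeriv_const,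
        if_neg hj.ne', sub_zero]
  rw [analyticOrderAt_eq_nat_iff_iteratedDeriv_eq_zero (hf.fun_sub analyticAt_const)]
  refine ⟨fun j hj => ?_, by rwa [hsub m hm]⟩
  rcases Nat.eq_zero_or_pos j with rfl | hj₀
  · simp
  · rw [hsub j hj₀, hvanish j hj₀ hj]

theorem AnalyticAt.eventually_deriv_ne_zero_of_iteratedDeriv_ne_zero {m : ℕ}
    (hf : AnalyticAt 𝕜 f z₀) (hm : 0 < m) (hder : iteratedDeriv m f z₀ ≠ 0) :
    ∀ᶠ z in 𝓝[≠] z₀, deriv f z ≠ 0 := by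
  refine hf.deriv.eventually_eq_zero_or_eventually_ne_zero.resolve_left fun hzero => hder ?_
  obtain ⟨k, rfl⟩ := Nat.exists_eq_add_of_lt hm
  have htop : ((k + 1 : ℕ) : ℕ∞) ≤ analyticOrderAt (deriv f) z₀ := by
    rw [analyticOrderAt_eq_top.mpr hzero]; exact le_top
  rw [zero_add, iteratedDeriv_succ']
  exact (natCast_le_analyticOrderAt_iff_iteratedDeriv_eq_zero hf.deriv).mp htop k k.lt_succ_self

end Analytic

theorem Real.isTheta_one_sub_cos : (fun s => 1 - Real.cos s) =Θ[𝓝 0] fun s => s ^ 2 := by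
  refine ⟨IsBigO.of_bound (1 / 2) (Eventually.of_forall fun s => ?_),
    IsBigO.of_bound (π ^ 2 / 2) ?_⟩
  · have := Real.one_sub_sq_div_two_le_cos (x := s)
    rw [Real.norm_of_nonneg (sub_nonneg.mpr (Real.cos_le_one s)), Real.norm_of_nonneg (sq_nonneg s)]
    linarith
  · filter_upwards [Metric.closedBall_mem_nhds (0 : ℝ) Real.pi_pos] with s hs
    rw [Metric.mem_closedBall, dist_zero_right, Real.norm_eq_abs] at hs
    have := Real.cos_le_one_sub_mul_cos_sq hs
    rw [Real.norm_of_nonneg (sub_nonneg.mpr (Real.cos_le_one s)), Real.norm_of_nonneg (sq_nonneg s)]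
    calc s ^ 2 = π ^ 2 / 2 * (2 / π ^ 2 * s ^ 2) := by field_simp
      _ ≤ π ^ 2 / 2 * (1 - Real.cos s) := by gcongr; linarith

theorem Real.isTheta_cos_sub_cos_of_sin_eq_zero {t₀ : ℝ} (ht₀ : Real.sin t₀ = 0) :
    (fun t => Real.cos t - Real.cos t₀) =Θ[𝓝 t₀] fun t => (t - t₀) ^ 2 := by
  have hcos : Real.cos t₀ ≠ 0 := fun h => by
    simpa [h, ht₀] using Real.sin_sq_add_cos_sq t₀
  have hshift : Tendsto (fun t => t - t₀) (𝓝 t₀) (𝓝 0) := by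
    simpa using (tendsto_id (x := 𝓝 t₀)).sub_const t₀
  have h := (Real.isTheta_one_sub_cos.comp_tendsto hshift).const_mul_left (neg_ne_zero.mpr hcos)
  -- `cos t = cos (t - t₀) cos t₀` because `sin t₀ = 0`
  refine (EventuallyEq.isTheta (Eventually.of_forall fun t => ?_)).trans h
  simp only [Function.comp_apply]
  rw [show t = (t - t₀) + t₀ by ring, Real.cos_add, ht₀]
  ring_nf

theorem HillContext.analyticAt_F (H : HillContext) (lam : ℂ) : AnalyticAt ℂ H.F lam :=
  Differentiable.analyticAt (fun z => (H.θ_entire 1 z).add (H.φd_entire 1 z)) lam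

/-- (Proposition 3(a), case `t₀ ∈ {0, π}`.)  Let `t₀ ∈ {0, π}`, `m ≥ 2` and let `λ₀` be an
eigenvalue of `L_{t₀}` of multiplicity `m`: `F(λ₀) = 2 cos t₀`, `F⁽ʲ⁾(λ₀) = 0` for
`1 ≤ j ≤ m-1`, `F⁽ᵐ⁾(λ₀) ≠ 0`.  If `λ_k` is a continuous branch on an open interval
`(a,b) ∋ t₀` with `λ_k(t₀) = λ₀` and `F(λ_k(t)) = 2 cos t`, then
`λ_k(t) - λ₀ ∼ (t - t₀)^{2/m}` as `t → t₀`, and for `t` near (but distinct from) `t₀` the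
eigenvalue `λ_k(t)` is simple, i.e. `F'(λ_k(t)) ≠ 0`. -/
theorem eigenvalue_branch_asymptotics_edge (H : HillContext)
    (t₀ : ℝ) (ht₀ : t₀ = 0 ∨ t₀ = π) (m : ℕ) (hm : 2 ≤ m) (lam₀ : ℂ)
    (hF0 : H.F lam₀ = 2 * (Real.cos t₀ : ℂ))
    (hFj : ∀ j : ℕ, 1 ≤ j → j ≤ m - 1 → iteratedDeriv j H.F lam₀ = 0)
    (hFm : iteratedDeriv m H.F lam₀ ≠ 0)
    (a b : ℝ) (ha : a < t₀) (hb : t₀ < b)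
    (lamk : ℝ → ℂ) (hcont : ContinuousOn lamk (Ioo a b))
    (hk0 : lamk t₀ = lam₀)
    (hFk : ∀ t ∈ Ioo a b, H.F (lamk t) = 2 * (Real.cos t : ℂ)) :
    ∃ δ c₁ c₂ : ℝ, 0 < δ ∧ 0 < c₁ ∧ 0 < c₂ ∧
      (∀ t ∈ Ioo a b, 0 < |t - t₀| → |t - t₀| ≤ δ →
        c₁ * |t - t₀| ^ ((2 : ℝ) / (m : ℝ)) ≤ ‖lamk t - lam₀‖ ∧
        ‖lamk t - lam₀‖ ≤ c₂ * |t - t₀| ^ ((2 : ℝ) / (m : ℝ))) ∧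
      ∃ δ' : ℝ, 0 < δ' ∧ δ' ≤ δ ∧
        ∀ t ∈ Ioo a b, 0 < |t - t₀| → |t - t₀| ≤ δ' → deriv H.F (lamk t) ≠ 0 := by
  have hF := H.analyticAt_F lam₀
  have hsin : Real.sin t₀ = 0 := by rcases ht₀ with rfl | rfl <;> simp
  have hlim : Tendsto lamk (𝓝 t₀) (𝓝 lam₀) := hk0 ▸ hcont.continuousAt (Ioo_mem_nhds ha hb)
  have hord := hF.analyticOrderAt_sub_eq_of_iteratedDeriv_s6 (by omega)
    (fun j hj hjm => hFj j hj (by omega)) hFm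
  have hdisc : (fun t => H.F (lamk t) - H.F lam₀) =ᶠ[𝓝 t₀]
      fun t => ((2 * (Real.cos t - Real.cos t₀) : ℝ) : ℂ) := by
    filter_upwards [Ioo_mem_nhds ha hb] with t ht
    rw [hFk t ht, hF0]; push_cast; ring
  have hbranch : (fun t => (lamk t - lam₀) ^ m) =Θ[𝓝 t₀] fun t => (t - t₀) ^ 2 :=
    (((hF.fun_sub analyticAt_const).isTheta_pow_of_analyticOrderAt_eq hord).comp_tendsto
      hlim).symm.trans (hdisc.trans_isTheta (Complex.isTheta_ofReal_left.mpr
        ((Real.isTheta_cos_sub_cos_of_sin_eq_zero hsin).const_mul_left two_ne_zero)))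
  obtain ⟨c₁, hc₁, c₂, hc₂, hbounds⟩ := (hbranch.norm_rpow_of_pow (by omega)).exists_pos_bounds
    (Eventually.of_forall fun t => by positivity)
  have hsimple : ∀ᶠ t in 𝓝[≠] t₀, deriv H.F (lamk t) ≠ 0 := by
    have hne : ∀ᶠ t in 𝓝[≠] t₀, lamk t ≠ lam₀ := by
      filter_upwards [hbranch.eq_zero_iff.filter_mono nhdsWithin_le_nhds, self_mem_nhdsWithin]
        with t ht htne
      exact fun h => htne (by simpa [h, show m ≠ 0 by omega, sub_eq_zero] using ht)
    exact (tendsto_nhdsWithin_of_tendsto_nhds_of_eventually_within _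
      (hlim.mono_left nhdsWithin_le_nhds) hne).eventually
      (hF.eventually_deriv_ne_zero_of_iteratedDeriv_ne_zero (by omega) hFm)
  obtain ⟨δ, hδ, hnear⟩ := exists_pos_forall_abs_sub_le_of_eventually_nhdsNE
    ((hbounds.filter_mono nhdsWithin_le_nhds).and hsimple)
  refine ⟨δ, c₁, c₂, hδ, hc₁, hc₂, fun t _ ht ht' => ?_, δ, hδ, le_rfl,
    fun t _ ht ht' => (hnear t ht ht').2⟩
  simpa using (hnear t ht ht').1
end
end

section
/- (Corollary 1(a)) Suppose q is even (q(−x) = q(x) a.e.). Let λ₀ ∈ ℂ satisfy F(λ₀) = 2, F'(λ₀) = 0, F''(λ₀) ≠ 0, and assume φ(1,·) and θ'(1,·) are not identically zero and have at most a simple zero at λ₀ (these hypotheses hold for every sufficiently large double eigenvalue of L₀). Then φ(1,λ₀) = 0 and θ'(1,λ₀) = 0, hence θ(1,λ₀) = φ'(1,λ₀) = 1 and every solution of −y'' + qy = λ₀y on [0,1] satisfies the periodic boundary conditions y(1) = y(0), y'(1) = y'(0). In particular, the eigenvalue λ₀ of L₀ has geometric multiplicity 2 and L₀ has no associated function corresponding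 to λ₀. The analogous statement holds for L_π (F(λ₀) = −2, antiperiodic boundary conditions). -/
open MeasureTheory Set
open scoped Real Classical

noncomputable section

/-- `g` (with first derivative `gd`) solves `-g'' + q g - λ g = ψ` on `[0,1]` in the
Carathéodory sense: `g` is an associated function for the eigenfunction `ψ`. -/
structure IsHillAssociated (q : ℝ → ℂ) (lam : ℂ) (ψ g gd : ℝ → ℂ) : Prop where
  int_gd : IntervalIntegrable gd volume 0 1
  int_rhs : IntervalIntegrable (fun s => q s * g s - lam * g s - ψ s) volume 0 1
  g_eq : ∀ x ∈ Icc (0:ℝ) 1, g x = g 0 + ∫ s in (0:ℝ)..x, gd s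
  gd_eq : ∀ x ∈ Icc (0:ℝ) 1,
    gd x = gd 0 + ∫ s in (0:ℝ)..x, (q s * g s - lam * g s - ψ s)

/-!
For an even potential, `x ↦ y(1 - x)` is again a solution, which forces
`φ(1,λ) (θ(1,λ) - φ'(1,λ)) = 0`; as `φ(1,·) ≢ 0`, the identity theorem gives
`φ'(1,·) = θ(1,·)`. Hence `F = 2 θ(1,·)` and the Wronskian identity reads
`φ(1,·) θ'(1,·) = θ(1,·)² - 1`, a product with a double zero at `λ₀`; since neither factor has a
multiple zero, both vanish, and the monodromy matrix at `λ₀` is `e^{it₀}` times the identity.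

An associated function would make the eigenfunction orthogonal (for `∫₀¹ u v`) to `θ(·,λ₀)`
and `φ(·,λ₀)`. Differentiating the Lagrange identity in `λ` shows that the Gram matrix of
`θ, φ` is diagonal with entries `-e^{it₀} ∂_λθ'(1,λ₀)` and `e^{it₀} ∂_λφ(1,λ₀)`, which the
simplicity hypotheses make nonzero, so the eigenfunction would vanish.
-/

lemma hasDerivAt_of_eq_add_sub_mul {𝕜 : Type*} [NontriviallyNormedField 𝕜] {h I : 𝕜 → 𝕜}
    {z₀ c : 𝕜} (hfac : ∀ z, h z = c + (z - z₀) * I z) (hI : ContinuousAt I z₀) :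
    HasDerivAt h (I z₀) z₀ := by
  rw [hasDerivAt_iff_tendsto_slope]
  refine (hI.tendsto.mono_left nhdsWithin_le_nhds).congr' ?_
  filter_upwards [self_mem_nhdsWithin] with z hz
  rw [slope_def_field, hfac z, hfac z₀]
  field_simp [sub_ne_zero.mpr hz]
  ring

lemma Differentiable.eq_zero_of_mul_eq_zero {f g : ℂ → ℂ} {z₀ : ℂ} (hg : Differentiable ℂ g)
    (hf : ContinuousAt f z₀) (hfg : ∀ z, f z * g z = 0) (hz₀ : f z₀ ≠ 0) : g = 0 := by
  have hloc : g =ᶠ[nhds z₀] 0 := by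
    filter_upwards [hf.eventually_ne hz₀] with z hz
    exact (mul_eq_zero.mp (hfg z)).resolve_left hz
  funext z
  exact (hg.differentiableOn.analyticOnNhd isOpen_univ)
    |>.eqOn_zero_of_preconnected_of_eventuallyEq_zero isPreconnected_univ (mem_univ z₀) hloc
      (mem_univ z)

lemma DifferentiableAt.eq_zero_and_eq_zero_of_mul {f g : ℂ → ℂ} {z : ℂ}
    (hf : DifferentiableAt ℂ f z) (hg : DifferentiableAt ℂ g z) (h0 : f z * g z = 0)
    (h1 : deriv (fun w => f w * g w) z = 0)
    (hf' : f z = 0 → deriv f z ≠ 0) (hg' : g z = 0 → deriv g z ≠ 0) : f z = 0 ∧ g z = 0 := by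
  rw [deriv_fun_mul hf hg] at h1
  have hfz : f z = 0 := by
    by_contra hfz
    have hgz := (mul_eq_zero.mp h0).resolve_left hfz
    rw [hgz, mul_zero, zero_add] at h1
    exact hg' hgz ((mul_eq_zero.mp h1).resolve_left hfz)
  rw [hfz, zero_mul, add_zero] at h1
  exact ⟨hfz, (mul_eq_zero.mp h1).resolve_left (hf' hfz)⟩

lemma Complex.exp_I_mul_ofReal_of_sin_eq_zero {t : ℝ} (h : Real.sin t = 0) :
    Complex.exp (Complex.I * t) = Real.cos t := by
  rw [mul_comm, Complex.exp_mul_I, ← Complex.ofReal_cos, ← Complex.ofReal_sin, h]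
  simp

section Primitive

variable {a b : ℝ}

lemma setIntegral_prod_mul_of_sections (hab : a ≤ b) {f g : ℝ → ℂ}
    (hf : IntegrableOn f (Ioc a b)) (hg : IntegrableOn g (Ioc a b))
    {W : Set (ℝ × ℝ)} (hW : MeasurableSet W)
    (hsec : ∀ s ∈ Ioc a b, ((fun t => (s, t)) ⁻¹' W ∩ Ioc a b : Set ℝ) =ᵐ[volume] Ioc a s) :
    ∫ p in W, f p.1 * g p.2 ∂((volume.restrict (Ioc a b)).prod (volume.restrict (Ioc a b)))
      = ∫ s in a..b, f s * ∫ t in a..s, g t := by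
  rw [← integral_indicator hW, integral_prod _ ((hf.mul_prod hg).indicator hW),
    intervalIntegral.integral_of_le hab]
  refine setIntegral_congr_fun measurableSet_Ioc fun s hs => ?_
  have hWs : MeasurableSet ((fun t => (s, t)) ⁻¹' W) :=
    hW.preimage (measurable_const.prodMk measurable_id)
  have hind : (fun t => W.indicator (fun p : ℝ × ℝ => f p.1 * g p.2) (s, t))
      = ((fun t => (s, t)) ⁻¹' W).indicator (fun t => f s * g t) := by
    ext t; simp [Set.indicator]
  rw [hind, integral_indicator hWs, Measure.restrict_restrict hWs,
    setIntegral_congr_set (hsec s hs), intervalIntegral.integral_of_le hs.1.le,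
    integral_const_mul]

lemma intervalIntegral_mul_intervalIntegral (hab : a ≤ b) {f g : ℝ → ℂ}
    (hf : IntervalIntegrable f volume a b) (hg : IntervalIntegrable g volume a b) :
    (∫ s in a..b, f s) * (∫ s in a..b, g s)
      = (∫ s in a..b, f s * ∫ t in a..s, g t) + ∫ s in a..b, g s * ∫ t in a..s, f t := by
  rw [intervalIntegrable_iff_integrableOn_Ioc_of_le hab] at hf hg
  -- Fubini on `[a,b]²`, split along the diagonal.
  set μ := volume.restrict (Ioc a b)
  have hle : MeasurableSet {p : ℝ × ℝ | p.2 ≤ p.1} :=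
    measurableSet_le measurable_snd measurable_fst
  have hlt : MeasurableSet {p : ℝ × ℝ | p.2 < p.1} :=
    measurableSet_lt measurable_snd measurable_fst
  have hsplit : ∫ p, f p.1 * g p.2 ∂(μ.prod μ)
      = (∫ p in {p : ℝ × ℝ | p.2 ≤ p.1}, f p.1 * g p.2 ∂(μ.prod μ))
        + ∫ p in {p : ℝ × ℝ | p.2 < p.1}, g p.1 * f p.2 ∂(μ.prod μ) := by
    rw [← integral_add_compl hle (hf.mul_prod hg), ← integral_indicator hle.compl,
      ← integral_indicator hlt, ← integral_prod_swap]
    congr 2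
    ext p
    by_cases h : p.2 < p.1 <;> simp [h, mul_comm, not_le.mpr]
  have hsec_le : ∀ s ∈ Ioc a b, ((fun t => (s, t)) ⁻¹' {p : ℝ × ℝ | p.2 ≤ p.1} ∩ Ioc a b : Set ℝ)
      =ᵐ[volume] Ioc a s := by
    intro s hs
    refine Filter.EventuallyEq.of_eq (Set.ext fun t => ?_)
    simp only [Set.mem_inter_iff, Set.mem_preimage, Set.mem_ofPred_eq, Set.mem_Ioc]
    exact ⟨fun h => ⟨h.2.1, h.1⟩, fun h => ⟨h.2, h.1, h.2.trans hs.2⟩⟩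
  have hsec_lt : ∀ s ∈ Ioc a b, ((fun t => (s, t)) ⁻¹' {p : ℝ × ℝ | p.2 < p.1} ∩ Ioc a b : Set ℝ)
      =ᵐ[volume] Ioc a s := by
    intro s hs
    refine Filter.EventuallyEq.trans (Filter.EventuallyEq.of_eq (Set.ext fun t => ?_))
      Ioo_ae_eq_Ioc
    simp only [Set.mem_inter_iff, Set.mem_preimage, Set.mem_ofPred_eq, Set.mem_Ioc,
      Set.mem_Ioo]
    exact ⟨fun h => ⟨h.2.1, h.1⟩, fun h => ⟨h.2, h.1, h.2.le.trans hs.2⟩⟩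
  rw [intervalIntegral.integral_of_le hab, intervalIntegral.integral_of_le hab,
    ← integral_prod_mul, hsplit, setIntegral_prod_mul_of_sections hab hf hg hle hsec_le,
    setIntegral_prod_mul_of_sections hab hg hf hlt hsec_lt]

variable {u ud v vd : ℝ → ℂ}

lemma continuousOn_of_eq_primitive (hud : IntervalIntegrable ud volume a b)
    (hu : ∀ y ∈ Icc a b, u y = u a + ∫ s in a..y, ud s) : ContinuousOn u (Icc a b) :=
  ((continuousOn_const.add (intervalIntegral.continuousOn_primitive_interval' hud
    left_mem_uIcc)).mono Icc_subset_uIcc).congr hu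

lemma integral_mul_add_mul_eq_sub_of_primitive (hab : a ≤ b)
    (hud : IntervalIntegrable ud volume a b) (hvd : IntervalIntegrable vd volume a b)
    (hu : ∀ y ∈ Icc a b, u y = u a + ∫ s in a..y, ud s)
    (hv : ∀ y ∈ Icc a b, v y = v a + ∫ s in a..y, vd s) :
    ∫ s in a..b, (ud s * v s + u s * vd s) = u b * v b - u a * v a := by
  have hU := intervalIntegral.continuousOn_primitive_interval' hud left_mem_uIcc
  have hV := intervalIntegral.continuousOn_primitive_interval' hvd left_mem_uIcc
  have hsplit : EqOn (fun s => ud s * v s + u s * vd s)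
      (fun s => (v a * ud s + u a * vd s)
        + (ud s * (∫ t in a..s, vd t) + vd s * ∫ t in a..s, ud t)) (uIcc a b) := by
    intro s hs
    rw [uIcc_of_le hab] at hs
    dsimp only
    rw [hu s hs, hv s hs]
    ring
  rw [intervalIntegral.integral_congr hsplit,
    intervalIntegral.integral_add ((hud.const_mul _).add (hvd.const_mul _))
      ((hud.mul_continuousOn hV).add (hvd.mul_continuousOn hU)),
    intervalIntegral.integral_add (hud.const_mul _) (hvd.const_mul _),
    intervalIntegral.integral_add (hud.mul_continuousOn hV) (hvd.mul_continuousOn hU),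
    ← intervalIntegral_mul_intervalIntegral hab hud hvd,
    intervalIntegral.integral_const_mul, intervalIntegral.integral_const_mul,
    hu b (right_mem_Icc.2 hab), hv b (right_mem_Icc.2 hab)]
  ring

lemma wronskian_eq_add_integral_of_primitive {fu fv : ℝ → ℂ} (hab : a ≤ b)
    (hud : IntervalIntegrable ud volume a b) (hfu : IntervalIntegrable fu volume a b)
    (hvd : IntervalIntegrable vd volume a b) (hfv : IntervalIntegrable fv volume a b)
    (hu : ∀ y ∈ Icc a b, u y = u a + ∫ s in a..y, ud s)
    (hu' : ∀ y ∈ Icc a b, ud y = ud a + ∫ s in a..y, fu s)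
    (hv : ∀ y ∈ Icc a b, v y = v a + ∫ s in a..y, vd s)
    (hv' : ∀ y ∈ Icc a b, vd y = vd a + ∫ s in a..y, fv s) :
    u b * vd b - ud b * v b
      = u a * vd a - ud a * v a + ∫ s in a..b, (u s * fv s - fu s * v s) := by
  have huc := (continuousOn_of_eq_primitive hud hu).mono (uIcc_of_le hab).subset
  have hvc := (continuousOn_of_eq_primitive hvd hv).mono (uIcc_of_le hab).subset
  have hvdc := (continuousOn_of_eq_primitive hfv hv').mono (uIcc_of_le hab).subset
  have h₁ := integral_mul_add_mul_eq_sub_of_primitive hab hud hfv hu hv'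
  have h₂ := integral_mul_add_mul_eq_sub_of_primitive hab hfu hvd hu' hv
  have hsub := intervalIntegral.integral_sub
    ((hud.mul_continuousOn hvdc).add (hfv.continuousOn_mul huc))
    ((hfu.mul_continuousOn hvc).add (hud.mul_continuousOn hvdc))
  rw [h₁, h₂] at hsub
  have hcongr : ∫ s in a..b, (u s * fv s - fu s * v s)
      = ∫ s in a..b, (ud s * vd s + u s * fv s - (fu s * v s + ud s * vd s)) :=
    intervalIntegral.integral_congr fun s _ => by ring
  rw [hcongr, hsub]
  ring

end Primitive

section HillEquation

variable {q : ℝ → ℂ} {lam mu : ℂ} {u ud v vd : ℝ → ℂ}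

lemma IsHillSolution.wronskian_eq (hu : IsHillSolution q lam u ud)
    (hv : IsHillSolution q mu v vd) {x : ℝ} (hx : x ∈ Icc (0:ℝ) 1) :
    u x * vd x - ud x * v x
      = u 0 * vd 0 - ud 0 * v 0 + (lam - mu) * ∫ s in (0:ℝ)..x, u s * v s := by
  have hsub : uIcc (0:ℝ) x ⊆ uIcc 0 1 :=
    uIcc_subset_uIcc_left (by simpa [uIcc_of_le] using hx)
  have hres : ∀ {w wd : ℝ → ℂ}, (∀ y ∈ Icc (0:ℝ) 1, w y = w 0 + ∫ s in (0:ℝ)..y, wd s) →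
      ∀ y ∈ Icc (0:ℝ) x, w y = w 0 + ∫ s in (0:ℝ)..y, wd s :=
    fun hw y hy => hw y (Icc_subset_Icc_right hx.2 hy)
  rw [wronskian_eq_add_integral_of_primitive hx.1 (hu.int_yd.mono_set hsub)
    (hu.int_rhs.mono_set hsub) (hv.int_yd.mono_set hsub) (hv.int_rhs.mono_set hsub)
    (hres hu.y_eq) (hres hu.yd_eq) (hres hv.y_eq) (hres hv.yd_eq),
    ← intervalIntegral.integral_const_mul]
  congr 2
  ext s
  ring

/-- The boundary terms of the Lagrange identity for `u` and `g` cancel because `ε² = 1`. -/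
lemma IsHillAssociated.integral_mul_eq_zero {ψ g gd : ℝ → ℂ} {ε : ℂ}
    (hg : IsHillAssociated q lam ψ g gd) (hu : IsHillSolution q lam u ud) (hε : ε ^ 2 = 1)
    (hu1 : u 1 = ε * u 0) (hud1 : ud 1 = ε * ud 0)
    (hg1 : g 1 = ε * g 0) (hgd1 : gd 1 = ε * gd 0) :
    ∫ s in (0:ℝ)..1, u s * ψ s = 0 := by
  have hW := wronskian_eq_add_integral_of_primitive zero_le_one hu.int_yd hu.int_rhs
    hg.int_gd hg.int_rhs hu.y_eq hu.yd_eq hg.g_eq hg.gd_eq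
  have hint : ∫ s in (0:ℝ)..1,
      (u s * (q s * g s - lam * g s - ψ s) - (q s * u s - lam * u s) * g s)
      = -∫ s in (0:ℝ)..1, u s * ψ s := by
    rw [← intervalIntegral.integral_neg]
    congr 1
    ext s
    ring
  rw [hint, hu1, hud1, hg1, hgd1] at hW
  linear_combination hW - (u 0 * gd 0 - ud 0 * g 0) * hε

lemma IsHillSolution.congr_ae {q' : ℝ → ℂ} (hq : ∀ᵐ s, q' s = q s)
    (hy : IsHillSolution q' lam u ud) : IsHillSolution q lam u ud where
  int_yd := hy.int_yd
  int_rhs := hy.int_rhs.congr_ae <| by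
    filter_upwards [ae_restrict_of_ae hq] with s hs using by rw [hs]
  y_eq := hy.y_eq
  yd_eq x hx := by
    rw [hy.yd_eq x hx]
    congr 1
    refine intervalIntegral.integral_congr_ae ?_
    filter_upwards [hq] with s hs using fun _ => by rw [hs]

lemma IsHillSolution.comp_one_sub (hy : IsHillSolution q lam u ud) :
    IsHillSolution (fun s => q (1 - s)) lam (fun s => u (1 - s)) (fun s => -ud (1 - s)) := by
  have hmem : ∀ y ∈ Icc (0:ℝ) 1, 1 - y ∈ Icc (0:ℝ) 1 := fun y hy =>
    ⟨by linarith [hy.2], by linarith [hy.1]⟩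
  have hreflect : ∀ {f : ℝ → ℂ}, IntervalIntegrable f volume 0 1 → ∀ y ∈ Icc (0:ℝ) 1,
      ∫ s in (0:ℝ)..y, f (1 - s) = (∫ s in (0:ℝ)..1, f s) - ∫ s in (0:ℝ)..(1 - y), f s := by
    intro f hf y hy
    rw [intervalIntegral.integral_comp_sub_left, sub_zero,
      intervalIntegral.integral_interval_sub_left hf
        (hf.mono_set (uIcc_subset_uIcc_left (by simpa [uIcc_of_le] using hmem y hy)))]
  constructor
  · simpa [Pi.neg_def] using (hy.int_yd.comp_sub_left 1).neg.symm
  · simpa using (hy.int_rhs.comp_sub_left 1).symm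
  · intro x hx
    rw [intervalIntegral.integral_neg, hreflect hy.int_yd x hx, sub_zero,
      hy.y_eq _ (hmem x hx), hy.y_eq 1 ⟨zero_le_one, le_rfl⟩]
    ring
  · intro x hx
    rw [hreflect hy.int_rhs x hx, sub_zero, hy.yd_eq _ (hmem x hx),
      hy.yd_eq 1 ⟨zero_le_one, le_rfl⟩]
    ring

/-- Differentiate the Lagrange identity for `u` and `w(·, μ)` in `μ` at `μ = λ`. -/
lemma IsHillSolution.integral_mul_eq {w wd : ℝ → ℂ → ℂ}
    (hu : IsHillSolution q lam u ud) (hw : ∀ μ, IsHillSolution q μ (w · μ) (wd · μ))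
    (hw0 : ∀ μ, w 0 μ = w 0 lam) (hwd0 : ∀ μ, wd 0 μ = wd 0 lam)
    (hu_cont : Continuous u) (hw_cont : Continuous fun p : ℝ × ℂ => w p.1 p.2)
    (hw1 : DifferentiableAt ℂ (w 1) lam) (hwd1 : DifferentiableAt ℂ (wd 1) lam) :
    ∫ s in (0:ℝ)..1, u s * w s lam = ud 1 * deriv (w 1) lam - u 1 * deriv (wd 1) lam := by
  have hI : Continuous fun μ => ∫ s in (0:ℝ)..1, u s * w s μ :=
    intervalIntegral.continuous_parametric_intervalIntegral_of_continuous'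
      ((hu_cont.comp continuous_snd).mul (hw_cont.comp continuous_swap)) 0 1
  have hfac : ∀ μ, u 1 * wd 1 μ - ud 1 * w 1 μ = (u 0 * wd 0 lam - ud 0 * w 0 lam)
      + (μ - lam) * -∫ s in (0:ℝ)..1, u s * w s μ := fun μ => by
    rw [hu.wronskian_eq (hw μ) ⟨zero_le_one, le_rfl⟩, hw0, hwd0]
    ring
  have h₁ := hasDerivAt_of_eq_add_sub_mul hfac hI.neg.continuousAt
  have h₂ := (hwd1.hasDerivAt.const_mul (u 1)).sub (hw1.hasDerivAt.const_mul (ud 1))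
  linear_combination h₂.unique h₁

end HillEquation

namespace HillContext

variable (H : HillContext) {lam : ℂ}

lemma continuous_θ (lam : ℂ) : Continuous (H.θ · lam) := H.θ_cont.comp (.prodMk_left lam)

lemma continuous_φ (lam : ℂ) : Continuous (H.φ · lam) := H.φ_cont.comp (.prodMk_left lam)

lemma eq_fundamental {y yd : ℝ → ℂ} (hy : IsHillSolution H.q lam y yd) {x : ℝ}
    (hx : x ∈ Icc (0:ℝ) 1) :
    y x = y 0 * H.θ x lam + yd 0 * H.φ x lam ∧
      yd x = y 0 * H.θd x lam + yd 0 * H.φd x lam := by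
  have hθ := hy.wronskian_eq (H.sol_θ lam) hx
  have hφ := hy.wronskian_eq (H.sol_φ lam) hx
  simp only [H.θ_init, H.θd_init, H.φ_init, H.φd_init, sub_self, zero_mul, add_zero] at hθ hφ
  have hW := H.wronskian x lam
  constructor
  · linear_combination H.θ x lam * hφ - H.φ x lam * hθ - y x * hW
  · linear_combination H.θd x lam * hφ - H.φd x lam * hθ - yd x * hW

lemma integral_θ_mul_θ (lam : ℂ) : ∫ s in (0:ℝ)..1, H.θ s lam * H.θ s lam
    = H.θd 1 lam * deriv (H.θ 1) lam - H.θ 1 lam * deriv (H.θd 1) lam :=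
  (H.sol_θ lam).integral_mul_eq H.sol_θ (by simp [H.θ_init]) (by simp [H.θd_init])
    (H.continuous_θ lam) H.θ_cont (H.θ_entire 1 lam) (H.θd_entire 1 lam)

lemma integral_φ_mul_φ (lam : ℂ) : ∫ s in (0:ℝ)..1, H.φ s lam * H.φ s lam
    = H.φd 1 lam * deriv (H.φ 1) lam - H.φ 1 lam * deriv (H.φd 1) lam :=
  (H.sol_φ lam).integral_mul_eq H.sol_φ (by simp [H.φ_init]) (by simp [H.φd_init])
    (H.continuous_φ lam) H.φ_cont (H.φ_entire 1 lam) (H.φd_entire 1 lam)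

lemma integral_θ_mul_φ (lam : ℂ) : ∫ s in (0:ℝ)..1, H.θ s lam * H.φ s lam
    = H.θd 1 lam * deriv (H.φ 1) lam - H.θ 1 lam * deriv (H.φd 1) lam :=
  (H.sol_θ lam).integral_mul_eq H.sol_φ (by simp [H.φ_init]) (by simp [H.φd_init])
    (H.continuous_θ lam) H.φ_cont (H.φ_entire 1 lam) (H.φd_entire 1 lam)

lemma eq_zero_of_integral_mul_eq_zero {ψ ψd : ℝ → ℂ} (hψ : IsHillSolution H.q lam ψ ψd)
    (hθψ : ∫ s in (0:ℝ)..1, H.θ s lam * ψ s = 0) (hφψ : ∫ s in (0:ℝ)..1, H.φ s lam * ψ s = 0)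
    (hφ1 : H.φ 1 lam = 0) (hθd1 : H.θd 1 lam = 0)
    (hφ1' : deriv (H.φ 1) lam ≠ 0) (hθd1' : deriv (H.θd 1) lam ≠ 0)
    (hφd1' : deriv (H.φd 1) lam = 0) {x : ℝ} (hx : x ∈ Icc (0:ℝ) 1) : ψ x = 0 := by
  have hW := H.wronskian 1 lam
  rw [hφ1, hθd1, zero_mul, sub_zero] at hW
  have hexpand : ∀ {w : ℝ → ℂ}, Continuous w → ∫ s in (0:ℝ)..1, w s * ψ s
      = ψ 0 * (∫ s in (0:ℝ)..1, w s * H.θ s lam)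
        + ψd 0 * ∫ s in (0:ℝ)..1, w s * H.φ s lam := by
    intro w hw
    have hwθ := (hw.mul (H.continuous_θ lam)).intervalIntegrable
      (u := fun s => w s * H.θ s lam) (μ := volume) 0 1
    have hwφ := (hw.mul (H.continuous_φ lam)).intervalIntegrable
      (u := fun s => w s * H.φ s lam) (μ := volume) 0 1
    rw [← intervalIntegral.integral_const_mul, ← intervalIntegral.integral_const_mul,
      ← intervalIntegral.integral_add (hwθ.const_mul _) (hwφ.const_mul _)]
    refine intervalIntegral.integral_congr fun s hs => ?_
    rw [uIcc_of_le zero_le_one] at hs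
    simp only [(H.eq_fundamental hψ hs).1]
    ring
  have hθφ : ∫ s in (0:ℝ)..1, H.θ s lam * H.φ s lam = 0 := by
    rw [integral_θ_mul_φ, hθd1, hφd1']
    ring
  have hφθ : ∫ s in (0:ℝ)..1, H.φ s lam * H.θ s lam = 0 := by
    simpa only [mul_comm] using hθφ
  have hθθ : ∫ s in (0:ℝ)..1, H.θ s lam * H.θ s lam ≠ 0 := by
    rw [integral_θ_mul_θ, hθd1, zero_mul, zero_sub, neg_ne_zero]
    exact mul_ne_zero (left_ne_zero_of_mul_eq_one hW) hθd1'
  have hφφ : ∫ s in (0:ℝ)..1, H.φ s lam * H.φ s lam ≠ 0 := by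
    rw [integral_φ_mul_φ, hφ1, zero_mul, sub_zero]
    exact mul_ne_zero (right_ne_zero_of_mul_eq_one hW) hφ1'
  rw [hexpand (H.continuous_θ lam), hθφ, mul_zero, add_zero] at hθψ
  rw [hexpand (H.continuous_φ lam), hφθ, mul_zero, zero_add] at hφψ
  rw [(H.eq_fundamental hψ hx).1, (mul_eq_zero.mp hθψ).resolve_right hθθ,
    (mul_eq_zero.mp hφψ).resolve_right hφφ]
  ring

lemma φ_one_mul_sub_eq_zero (heven : ∀ᵐ x : ℝ ∂volume, H.q (-x) = H.q x) (lam : ℂ) :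
    H.φ 1 lam * (H.θ 1 lam - H.φd 1 lam) = 0 := by
  have hq : ∀ᵐ s, H.q (1 - s) = H.q s := by
    filter_upwards [heven] with s hs
    rw [sub_eq_neg_add, H.periodic_q, hs]
  have h :=
    (H.eq_fundamental ((H.sol_φ lam).comp_one_sub.congr_ae hq) ⟨zero_le_one, le_rfl⟩).1
  simp only [sub_self, sub_zero, H.φ_init] at h
  linear_combination -h

lemma φd_one_eq_θ_one (heven : ∀ᵐ x : ℝ ∂volume, H.q (-x) = H.q x)
    (hφ : ∃ μ, H.φ 1 μ ≠ 0) : H.φd 1 = H.θ 1 := by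
  obtain ⟨μ, hμ⟩ := hφ
  have h := ((H.θ_entire 1).sub (H.φd_entire 1)).eq_zero_of_mul_eq_zero
    (H.φ_entire 1 μ).continuousAt (H.φ_one_mul_sub_eq_zero heven) hμ
  exact (sub_eq_zero.mp h).symm

lemma φ_one_eq_zero_and_θd_one_eq_zero (hd : H.φd 1 = H.θ 1) (hθ1 : H.θ 1 lam ^ 2 = 1)
    (hθ1' : deriv (H.θ 1) lam = 0)
    (hφ_simple : H.φ 1 lam = 0 → deriv (H.φ 1) lam ≠ 0)
    (hθd_simple : H.θd 1 lam = 0 → deriv (H.θd 1) lam ≠ 0) :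
    H.φ 1 lam = 0 ∧ H.θd 1 lam = 0 := by
  have hprod : ∀ z, H.φ 1 z * H.θd 1 z = H.θ 1 z ^ 2 - 1 := fun z => by
    linear_combination H.θ 1 z * congrFun hd z - H.wronskian 1 z
  refine (H.φ_entire 1 lam).eq_zero_and_eq_zero_of_mul (H.θd_entire 1 lam) ?_ ?_
    hφ_simple hθd_simple
  · rw [hprod, hθ1, sub_self]
  · rw [funext hprod, deriv_sub_const, deriv_fun_pow' (H.θ_entire 1 lam), hθ1']
    simp

end HillContext

theorem even_potential_double_eigenvalue_structure_general (H : HillContext)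
    (heven : ∀ᵐ x : ℝ ∂volume, H.q (-x) = H.q x)
    (t₀ : ℝ) (ht₀ : t₀ = 0 ∨ t₀ = π) (lam₀ : ℂ)
    (hF0 : H.F lam₀ = 2 * (Real.cos t₀ : ℂ))
    (hF1 : deriv H.F lam₀ = 0)
    (hφ_ne : ∃ mu : ℂ, H.φ 1 mu ≠ 0)
    (hφ_simple : H.φ 1 lam₀ = 0 → deriv (fun z => H.φ 1 z) lam₀ ≠ 0)
    (hθd_simple : H.θd 1 lam₀ = 0 → deriv (fun z => H.θd 1 z) lam₀ ≠ 0) :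
    H.φ 1 lam₀ = 0 ∧ H.θd 1 lam₀ = 0 ∧
    H.θ 1 lam₀ = Complex.exp (Complex.I * (t₀ : ℂ)) ∧
    H.φd 1 lam₀ = Complex.exp (Complex.I * (t₀ : ℂ)) ∧
    (∀ y yd : ℝ → ℂ, IsHillSolution H.q lam₀ y yd →
      y 1 = Complex.exp (Complex.I * (t₀ : ℂ)) * y 0 ∧
      yd 1 = Complex.exp (Complex.I * (t₀ : ℂ)) * yd 0) ∧
    (∀ ψ ψd g gd : ℝ → ℂ,
      IsHillSolution H.q lam₀ ψ ψd →
      (∃ x ∈ Icc (0:ℝ) 1, ψ x ≠ 0) →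
      ψ 1 = Complex.exp (Complex.I * (t₀ : ℂ)) * ψ 0 →
      ψd 1 = Complex.exp (Complex.I * (t₀ : ℂ)) * ψd 0 →
      IsHillAssociated H.q lam₀ ψ g gd →
      g 1 = Complex.exp (Complex.I * (t₀ : ℂ)) * g 0 →
      gd 1 = Complex.exp (Complex.I * (t₀ : ℂ)) * gd 0 →
      False) := by
  have hsin : Real.sin t₀ = 0 := by rcases ht₀ with rfl | rfl <;> simp
  have hε := Complex.exp_I_mul_ofReal_of_sin_eq_zero hsin
  set ε := Complex.exp (Complex.I * (t₀ : ℂ))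
  have hε2 : ε ^ 2 = 1 := by
    rw [hε, ← Complex.ofReal_pow, Real.cos_sq', hsin]
    simp
  have hd := H.φd_one_eq_θ_one heven hφ_ne
  have hF : H.F = fun z => 2 * H.θ 1 z := funext fun z => by rw [HillContext.F, hd]; ring
  have hθ1 : H.θ 1 lam₀ = ε := by
    rw [hF] at hF0
    linear_combination hF0 / 2 - hε
  have hθ1' : deriv (H.θ 1) lam₀ = 0 := by
    rw [hF, deriv_const_mul _ (H.θ_entire 1 lam₀)] at hF1
    simpa using hF1
  obtain ⟨hφ1, hθd1⟩ := H.φ_one_eq_zero_and_θd_one_eq_zero hd (hθ1 ▸ hε2) hθ1'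
    hφ_simple hθd_simple
  have hbc : ∀ y yd, IsHillSolution H.q lam₀ y yd → y 1 = ε * y 0 ∧ yd 1 = ε * yd 0 := by
    intro y yd hy
    obtain ⟨hy1, hyd1⟩ := H.eq_fundamental hy ⟨zero_le_one, le_rfl⟩
    rw [hy1, hyd1, hφ1, hθd1, hd, hθ1]
    constructor <;> ring
  refine ⟨hφ1, hθd1, hθ1, (congrFun hd lam₀).trans hθ1, hbc, ?_⟩
  rintro ψ ψd g gd hψ ⟨x, hx, hψx⟩ - - hg hg1 hgd1
  have horth : ∀ {u ud}, IsHillSolution H.q lam₀ u ud → ∫ s in (0:ℝ)..1, u s * ψ s = 0 :=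
    fun hu => hg.integral_mul_eq_zero hu hε2 (hbc _ _ hu).1 (hbc _ _ hu).2 hg1 hgd1
  exact hψx <| H.eq_zero_of_integral_mul_eq_zero hψ (horth (H.sol_θ lam₀))
    (horth (H.sol_φ lam₀)) hφ1 hθd1 (hφ_simple hφ1) (hθd_simple hθd1) (hd ▸ hθ1') hx

/-- (Corollary 1(a).)  Suppose `q` is even (`q(-x) = q(x)` a.e.).  Let `λ₀` be a double
eigenvalue of `L₀` (resp. `L_π`): `F(λ₀) = 2 cos t₀` with `t₀ ∈ {0,π}`, `F'(λ₀) = 0`,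
`F''(λ₀) ≠ 0`; assume `φ(1,·)` and `θ'(1,·)` are not identically zero and have at most a
simple zero at `λ₀`.  Then `φ(1,λ₀) = 0` and `θ'(1,λ₀) = 0`, hence
`θ(1,λ₀) = φ'(1,λ₀) = e^{it₀}` and every solution of `-y'' + q y = λ₀ y` on `[0,1]`
satisfies the (anti)periodic boundary conditions `y(1) = e^{it₀} y(0)`,
`y'(1) = e^{it₀} y'(0)`.  In particular the eigenvalue `λ₀` has geometric multiplicity
`2` and `L_{t₀}` has no associated function corresponding to `λ₀`. -/
theorem even_potential_double_eigenvalue_structure (H : HillContext)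
    (heven : ∀ᵐ x : ℝ ∂volume, H.q (-x) = H.q x)
    (t₀ : ℝ) (ht₀ : t₀ = 0 ∨ t₀ = π) (lam₀ : ℂ)
    (hF0 : H.F lam₀ = 2 * (Real.cos t₀ : ℂ))
    (hF1 : deriv H.F lam₀ = 0)
    (hF2 : iteratedDeriv 2 H.F lam₀ ≠ 0)
    (hφ_ne : ∃ mu : ℂ, H.φ 1 mu ≠ 0)
    (hθd_ne : ∃ mu : ℂ, H.θd 1 mu ≠ 0)
    (hφ_simple : H.φ 1 lam₀ = 0 → deriv (fun z => H.φ 1 z) lam₀ ≠ 0)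
    (hθd_simple : H.θd 1 lam₀ = 0 → deriv (fun z => H.θd 1 z) lam₀ ≠ 0) :
    H.φ 1 lam₀ = 0 ∧ H.θd 1 lam₀ = 0 ∧
    H.θ 1 lam₀ = Complex.exp (Complex.I * (t₀ : ℂ)) ∧
    H.φd 1 lam₀ = Complex.exp (Complex.I * (t₀ : ℂ)) ∧
    (∀ y yd : ℝ → ℂ, IsHillSolution H.q lam₀ y yd →
      y 1 = Complex.exp (Complex.I * (t₀ : ℂ)) * y 0 ∧
      yd 1 = Complex.exp (Complex.I * (t₀ : ℂ)) * yd 0) ∧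
    (∀ ψ ψd g gd : ℝ → ℂ,
      IsHillSolution H.q lam₀ ψ ψd →
      (∃ x ∈ Icc (0:ℝ) 1, ψ x ≠ 0) →
      ψ 1 = Complex.exp (Complex.I * (t₀ : ℂ)) * ψ 0 →
      ψd 1 = Complex.exp (Complex.I * (t₀ : ℂ)) * ψd 0 →
      IsHillAssociated H.q lam₀ ψ g gd →
      g 1 = Complex.exp (Complex.I * (t₀ : ℂ)) * g 0 →
      gd 1 = Complex.exp (Complex.I * (t₀ : ℂ)) * gd 0 →
      False) :=
  even_potential_double_eigenvalue_structure_general H heven t₀ ht₀ lam₀ hF0 hF1 hφ_ne hφ_simple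
    hθd_simple

end
end
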